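/- arXiv:1310.5261 — 8 statements merged into one kernel-verified Lean document; each statement's English description precedes it below -/
import Mathlib

section
/- Let K be a field, X ∈ Mat_n(K), and p, q ∈ K[x]. If q(p(X)) is similar to X, then Cent(X) = Cent(p(X)). -/
/-- Two square matrices are similar if they are conjugate by an invertible matrix. -/
def Matrix.Similar {K : Type*} [Field K] {n : ℕ} (A B : Matrix (Fin n) (Fin n) K) : Prop :=
  ∃ g : (Matrix (Fin n) (Fin n) K)ˣ,
    (↑g⁻¹ : Matrix (Fin n) (Fin n) K) * A * (↑g : Matrix (Fin n) (Fin n) K) = B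

/-- The centralizer of a matrix: all matrices commuting with it. -/
def Matrix.cent {K : Type*} [Field K] {n : ℕ} (X : Matrix (Fin n) (Fin n) K) :
    Set (Matrix (Fin n) (Fin n) K) :=
  {W | W * X = X * W}

/-!
Every matrix commuting with `X` commutes with `p(X)`, and every matrix commuting with `p(X)`
commutes with `q(p(X))`, so `Cent(X) ⊆ Cent(p(X)) ⊆ Cent(q(p(X)))`. Since `q(p(X))` is similar
to `X`, conjugation is an algebra automorphism carrying `Cent(q(p(X)))` onto `Cent(X)`; so the
two ends of the chain have the same finite dimension and all three centralizers coincide.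
-/

open Polynomial Module

namespace Subalgebra

theorem centralizer_singleton_le_centralizer_aeval {R A : Type*} [CommSemiring R] [Semiring A]
    [Algebra R A] (x : A) (p : R[X]) :
    centralizer R {x} ≤ centralizer R {aeval x p} := by
  have hmem : aeval x p ∈ centralizer R (centralizer R {x}) :=
    Algebra.adjoin_le_centralizer_centralizer R {x} (aeval_mem_adjoin_singleton R x)
  rintro y hy _ rfl
  exact (hmem y hy).symm

theorem map_centralizer {R A B : Type*} [CommSemiring R] [Semiring A] [Semiring B]
    [Algebra R A] [Algebra R B] (e : A ≃ₐ[R] B) (s : Set A) :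
    (centralizer R s).map (e : A →ₐ[R] B) = centralizer R (e '' s) := by
  ext y
  obtain ⟨z, rfl⟩ := e.surjective y
  simp [mem_centralizer_iff, ← map_mul]

theorem finrank_centralizer_units_conj {R A : Type*} [CommRing R] [Ring A] [Algebra R A]
    (u : Aˣ) (x : A) :
    finrank R (centralizer R {↑u⁻¹ * x * ↑u}) = finrank R (centralizer R {x}) := by
  let e := MulSemiringAction.toAlgEquiv R A (ConjAct.toConjAct u⁻¹)
  have he : e x = ↑u⁻¹ * x * ↑u := by simp [e, ConjAct.units_smul_def]
  rw [← he, ← Set.image_singleton, ← map_centralizer]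
  exact (e.subalgebraMap _).toLinearEquiv.finrank_eq.symm

theorem centralizer_singleton_eq_centralizer_aeval_of_units_conj {K A : Type*} [Field K] [Ring A]
    [Algebra K A] [FiniteDimensional K A] (x : A) (p q : K[X]) (u : Aˣ)
    (h : ↑u⁻¹ * aeval (aeval x p) q * ↑u = x) :
    centralizer K {x} = centralizer K {aeval x p} := by
  refine eq_of_le_of_finrank_le (centralizer_singleton_le_centralizer_aeval x p) ?_
  calc finrank K (centralizer K {aeval x p})
      ≤ finrank K (centralizer K {aeval (aeval x p) q}) :=
        Submodule.finrank_mono <|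
          toSubmodule.monotone (centralizer_singleton_le_centralizer_aeval (aeval x p) q)
    _ = finrank K (centralizer K {x}) := by
        rw [← finrank_centralizer_units_conj u, h]

end Subalgebra

theorem Matrix.cent_eq_centralizer {K : Type*} [Field K] {n : ℕ} (X : Matrix (Fin n) (Fin n) K) :
    Matrix.cent X = Subalgebra.centralizer K {X} := by
  ext W
  simp [Matrix.cent, Set.mem_centralizer_iff, eq_comm]

/-- If `q(p(X))` is similar to `X`, then `Cent(X) = Cent(p(X))`. -/
theorem cent_eq_cent_aeval_of_similar
    (K : Type*) [Field K] (n : ℕ) (X : Matrix (Fin n) (Fin n) K) (p q : Polynomial K)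
    (h : (Polynomial.aeval (Polynomial.aeval X p) q).Similar X) :
    Matrix.cent X = Matrix.cent (Polynomial.aeval X p) := by
  obtain ⟨g, hg⟩ := h
  rw [Matrix.cent_eq_centralizer, Matrix.cent_eq_centralizer,
    Subalgebra.centralizer_singleton_eq_centralizer_aeval_of_units_conj X p q g hg]
end

section
/- Let K be a field containing an element c with c ≠ 0 and c ≠ 1 (equivalently, a field with more than two elements), let X ∈ Mat_n(K), and let Y ∈ Mat_n(K) be a matrix commuting with X. Then there exist invertible matrices T, U ∈ Mat_n(K), each commuting with X, such that Y = T + U. In other words, every element of Cent(X) is a sum of two units of Cent(X). -/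
open Polynomial in
/-- Key polynomial lemma: over a field with an element `c ∉ {0,1}`, for every
nonzero polynomial `f` there is `p` with both `p` and `X - p` coprime to `f`. -/
theorem exists_coprime_and_sub_coprime
    (K : Type*) [Field K] (c : K) (hc0 : c ≠ 0) (hc1 : c ≠ 1) (f : K[X]) (hf : f ≠ 0) :
    ∃ p : K[X], IsCoprime p f ∧ IsCoprime ((X : K[X]) - p) f := by
  revert hf
  induction f using UniqueFactorizationMonoid.induction_on_prime with
  | h₁ => exact fun h => absurd rfl h
  | h₂ x hx =>
      obtain ⟨u, rfl⟩ := hx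
      exact fun _ => ⟨1, ⟨0, ↑u⁻¹, by simp⟩, ⟨0, ↑u⁻¹, by simp⟩⟩
  | h₃ g q hg hq ih =>
      intro _
      obtain ⟨p₀, h1, h2⟩ := ih hg
      by_cases hdvd : q ∣ g
      · obtain ⟨r, rfl⟩ := hdvd
        exact ⟨p₀, (h1.of_mul_right_left).mul_right h1,
          (h2.of_mul_right_left).mul_right h2⟩
      · haveI : Fact (Irreducible q) := ⟨hq.irreducible⟩
        set L := AdjoinRoot q
        set π := AdjoinRoot.mk q with hπ
        have hinj : Function.Injective (AdjoinRoot.of q) :=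
          (AdjoinRoot.of q).injective
        have hg0 : π g ≠ 0 := fun h => hdvd (AdjoinRoot.mk_eq_zero.mp h)
        set xb := π X with hxb
        set a : L := if xb = 1 then AdjoinRoot.of q c else 1 with ha
        have ha0 : a ≠ 0 := by
          rw [ha]; split
          · simpa using fun h => hc0 (hinj (by simpa using h))
          · exact one_ne_zero
        have haX : a ≠ xb := by
          rw [ha]; split
          · rename_i h; rw [h]
            exact fun h' => hc1 (hinj (by simpa using h'))
          · rename_i h; exact fun h' => h h'.symm
        obtain ⟨h, hh⟩ := AdjoinRoot.mk_surjective (g := q) ((a - π p₀) / π g)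
        set p := p₀ + g * h with hp
        have hπp : π p = a := by
          rw [hp, map_add, map_mul, hh, mul_div_cancel₀ _ hg0]
          ring
        have cp_q : IsCoprime p q := by
          rw [isCoprime_comm, hq.coprime_iff_not_dvd]
          intro hd
          exact ha0 (hπp ▸ AdjoinRoot.mk_eq_zero.mpr hd)
        have cp_g : IsCoprime p g := h1.add_mul_left_left h
        have cq_q : IsCoprime ((X : K[X]) - p) q := by
          rw [isCoprime_comm, hq.coprime_iff_not_dvd]
          intro hd
          have h0 : π ((X : K[X]) - p) = 0 := AdjoinRoot.mk_eq_zero.mpr hd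
          rw [map_sub, hπp] at h0
          exact haX (by linear_combination -h0)
        have cq_g : IsCoprime ((X : K[X]) - p) g := by
          have he : (X : K[X]) - p = ((X : K[X]) - p₀) + g * (-h) := by rw [hp]; ring
          rw [he]
          exact h2.add_mul_left_left (-h)
        exact ⟨p, cp_q.mul_right cp_g, cq_q.mul_right cq_g⟩

/-- Over a field with more than two elements, every matrix commuting with `X`
is a sum of two invertible matrices each commuting with `X`; that is, every element
of the centralizer algebra of `X` is a sum of two of its units. -/
theorem centralizer_element_eq_add_of_units
    (K : Type*) [Field K] (c : K) (hc0 : c ≠ 0) (hc1 : c ≠ 1)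
    (n : ℕ) (X Y : Matrix (Fin n) (Fin n) K) (hY : Y * X = X * Y) :
    ∃ T U : Matrix (Fin n) (Fin n) K,
      IsUnit T ∧ IsUnit U ∧ T * X = X * T ∧ U * X = X * U ∧ Y = T + U := by
  obtain ⟨p, hp1, hp2⟩ := exists_coprime_and_sub_coprime K c hc0 hc1 Y.charpoly
    (Matrix.charpoly_monic Y).ne_zero
  have comm : ∀ r : Polynomial K, (Polynomial.aeval Y r) * X = X * (Polynomial.aeval Y r) := by
    intro r
    induction r using Polynomial.induction_on with
    | C a =>
        simp only [Polynomial.aeval_C]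
        exact Algebra.commutes a X
    | add r s hr hs => simp only [map_add, add_mul, mul_add, hr, hs]
    | monomial m k hm =>
        have hYX : Commute Y X := hY
        have hcom : Commute (Polynomial.aeval Y (Polynomial.C k * Polynomial.X ^ (m + 1))) X := by
          simp only [map_mul, map_pow, Polynomial.aeval_X, Polynomial.aeval_C]
          have h1 : Commute ((algebraMap K (Matrix (Fin n) (Fin n) K)) k) X :=
            Algebra.commutes k X
          exact h1.mul_left (hYX.pow_left (m + 1))
        exact hcom
  have unit_of_coprime : ∀ r : Polynomial K,
      IsCoprime r Y.charpoly → IsUnit (Polynomial.aeval Y r) := by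
    intro r ⟨a, b, hab⟩
    have h1 : Polynomial.aeval Y (a * r) = 1 := by
      have := congrArg (Polynomial.aeval Y) hab
      simpa [Matrix.aeval_self_charpoly] using this
    refine ⟨⟨Polynomial.aeval Y r, Polynomial.aeval Y a, ?_, ?_⟩, rfl⟩
    · rw [← map_mul, mul_comm, h1]
    · rw [← map_mul, h1]
  refine ⟨Polynomial.aeval Y p, Polynomial.aeval Y ((Polynomial.X : Polynomial K) - p),
    unit_of_coprime _ hp1, unit_of_coprime _ hp2, comm p, comm _, ?_⟩
  rw [← map_add]
  simp
end

section
/- Let K be a field, X ∈ Mat_n(K), I a finite index set, f_i ∈ K[x] monic irreducible polynomials and e_i positive integers (i ∈ I), and suppose that K^n, as a K[x]-module with x acting as X, is isomorphic to ⊕_{i∈I} K[x]/(f_i^{e_i}). Then the dimension of Cent(X) as a K-vector space equals Σ over all pairs (i,j) ∈ I×I with f_i = f_j of deg(f_i)·min(e_i, e_j). -/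
/-!
The centralizer of `X` is the algebra of `K[x]`-linear endomorphisms of `K^n`, hence of
`⨁ i, K[x]/(f i ^ e i)`, and this splits as the product of the spaces
`Hom(K[x]/(f i ^ e i), K[x]/(f j ^ e j))`. A map out of a cyclic module `R/(c)` is determined by
the image of `1`, an element killed by `c`; in `R/(d)` these elements are the multiples of
`d / g` with `g = gcd c d`, a copy of `R/(g)`. Finally `gcd (f^a) (f^b)` is associated to
`f ^ min a b`, whereas powers of distinct monic irreducibles are coprime.
-/

open scoped DirectSum
open Module Polynomial Submodule

section CyclicModules

variable {R : Type*} [CommRing R]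

def quotSpanSingletonLinearMapEquivTorsionBy {M : Type*} [AddCommGroup M] [Module R M] (c : R) :
    ((R ⧸ Ideal.span {c}) →ₗ[R] M) ≃ₗ[R] torsionBy R M c where
  toFun φ := ⟨φ (Submodule.Quotient.mk 1), by
    rw [mem_torsionBy_iff, ← map_smul, ← Quotient.mk_smul, smul_eq_mul, mul_one,
      (Quotient.mk_eq_zero _).mpr (Ideal.mem_span_singleton_self c), map_zero]⟩
  invFun m := liftQSpanSingleton c (LinearMap.toSpanSingleton R M m)
    (by simp [(mem_torsionBy_iff _ _).mp m.2])
  map_add' _ _ := rfl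
  map_smul' _ _ := rfl
  left_inv φ := linearMap_qext _ <| LinearMap.ext_ring <| by
    dsimp only [LinearMap.comp_apply, mkQ_apply]
    exact (liftQSpanSingleton_apply _ _ _ (1 : R)).trans (one_smul R _)
  right_inv m := Subtype.ext <| (liftQSpanSingleton_apply _ _ _ (1 : R)).trans (one_smul R _)

theorem nonempty_torsionBy_quotSpanSingleton_equiv [IsDomain R] [GCDMonoid R] (c : R) {d : R}
    (hd : d ≠ 0) :
    Nonempty (torsionBy R (R ⧸ Ideal.span {d}) c ≃ₗ[R] R ⧸ Ideal.span {gcd c d}) := by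
  obtain ⟨c', k, hc, hdk, hu⟩ := extract_gcd c d
  set g := gcd c d
  have hk : k ≠ 0 := right_ne_zero_of_mul (hdk ▸ hd)
  have hg : g ≠ 0 := left_ne_zero_of_mul (hdk ▸ hd)
  have mk_eq_zero (y : R) : Submodule.Quotient.mk (p := Ideal.span {d}) y = 0 ↔ g * k ∣ y := by
    rw [Quotient.mk_eq_zero, Ideal.mem_span_singleton, ← hdk]
  have hmem : Submodule.Quotient.mk k ∈ torsionBy R (R ⧸ Ideal.span {d}) c := by
    rw [mem_torsionBy_iff, ← Quotient.mk_smul, mk_eq_zero, smul_eq_mul, hc]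
    exact ⟨c', by ring⟩
  let ψ := LinearMap.toSpanSingleton R _ (⟨_, hmem⟩ : torsionBy R (R ⧸ Ideal.span {d}) c)
  have hker : LinearMap.ker ψ = Ideal.span {g} := by
    ext r
    rw [LinearMap.mem_ker, Ideal.mem_span_singleton, LinearMap.toSpanSingleton_apply,
      ← Subtype.coe_inj, Submodule.coe_smul, ← Quotient.mk_smul, ZeroMemClass.coe_zero,
      mk_eq_zero, smul_eq_mul, mul_dvd_mul_iff_right hk]
  have hsurj : Function.Surjective ψ := by
    rintro ⟨x, hx⟩
    obtain ⟨y, rfl⟩ := Submodule.Quotient.mk_surjective _ x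
    rw [mem_torsionBy_iff, ← Quotient.mk_smul, mk_eq_zero, smul_eq_mul, hc, mul_assoc,
      mul_dvd_mul_iff_left hg] at hx
    obtain ⟨r, rfl⟩ := (gcd_isUnit_iff_isRelPrime.mp hu).symm.dvd_of_dvd_mul_left hx
    exact ⟨r, Subtype.ext <| (Quotient.mk_smul _ r k).symm.trans (by rw [smul_eq_mul, mul_comm])⟩
  exact ⟨(ψ.quotKerEquivOfSurjective hsurj).symm.trans (quotEquivOfEq _ _ hker)⟩

end CyclicModules

section PolynomialQuotients

variable {K : Type*} [Field K] [DecidableEq K]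

namespace Polynomial

theorem natDegree_gcd_pow_pow_self (p : K[X]) (a b : ℕ) :
    (gcd (p ^ a) (p ^ b)).natDegree = p.natDegree * min a b := by
  have hassoc : Associated (gcd (p ^ a) (p ^ b)) (p ^ min a b) := by
    refine associated_of_dvd_dvd ?_
      (dvd_gcd (pow_dvd_pow p (min_le_left a b)) (pow_dvd_pow p (min_le_right a b)))
    rcases min_choice a b with h | h <;> rw [h]
    exacts [gcd_dvd_left _ _, gcd_dvd_right _ _]
  rw [natDegree_eq_of_degree_eq (degree_eq_degree_of_associated hassoc), natDegree_pow, mul_comm]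

theorem natDegree_gcd_pow_pow_of_ne {p q : K[X]} (hp : p.Monic) (hq : q.Monic)
    (hip : Irreducible p) (hiq : Irreducible q) (hpq : p ≠ q) (a b : ℕ) :
    (gcd (p ^ a) (q ^ b)).natDegree = 0 := by
  have hrel : IsRelPrime p q := hip.isRelPrime_iff_not_dvd.mpr fun hdvd =>
    hpq (eq_of_monic_of_associated hp hq ((hip.dvd_irreducible_iff_associated hiq).mp hdvd))
  exact natDegree_eq_zero_of_isUnit (gcd_isUnit_iff_isRelPrime.mpr hrel.pow_left.pow_right)

end Polynomial

theorem nonempty_linearMap_quotSpanSingleton_equiv (c : K[X]) {d : K[X]} (hd : d ≠ 0) :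
    Nonempty (((K[X] ⧸ Ideal.span {c}) →ₗ[K[X]] (K[X] ⧸ Ideal.span {d})) ≃ₗ[K[X]]
      K[X] ⧸ Ideal.span {gcd c d}) :=
  (nonempty_torsionBy_quotSpanSingleton_equiv c hd).map
    (quotSpanSingletonLinearMapEquivTorsionBy c).trans

theorem finiteDimensional_linearMap_quotSpanSingleton (c : K[X]) {d : K[X]} (hd : d ≠ 0) :
    FiniteDimensional K ((K[X] ⧸ Ideal.span {c}) →ₗ[K[X]] (K[X] ⧸ Ideal.span {d})) := by
  obtain ⟨e⟩ := nonempty_linearMap_quotSpanSingleton_equiv c hd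
  have hg : gcd c d ≠ 0 := mt (gcd_eq_zero_iff c d).mp (hd ∘ And.right)
  have hg_monic : (gcd c d).Monic := normalize_gcd c d ▸ monic_normalize hg
  have := hg_monic.finite_quotient
  exact Module.Finite.equiv (e.restrictScalars K).symm

theorem finrank_linearMap_quotSpanSingleton (c : K[X]) {d : K[X]} (hd : d ≠ 0) :
    finrank K ((K[X] ⧸ Ideal.span {c}) →ₗ[K[X]] (K[X] ⧸ Ideal.span {d})) =
      (gcd c d).natDegree := by
  obtain ⟨e⟩ := nonempty_linearMap_quotSpanSingleton_equiv c hd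
  rw [(e.restrictScalars K).finrank_eq, finrank_quotient_span_eq_natDegree]

end PolynomialQuotients

theorem finrank_end_directSum {K R ι : Type*} [Field K] [CommRing R] [Algebra K R] [Fintype ι]
    (N : ι → Type*) [∀ i, AddCommGroup (N i)] [∀ i, Module R (N i)] [∀ i, Module K (N i)]
    [∀ i, IsScalarTower K R (N i)] [∀ i j, FiniteDimensional K (N i →ₗ[R] N j)] :
    finrank K (Module.End R (⨁ i, N i)) = ∑ i, ∑ j, finrank K (N i →ₗ[R] N j) := by
  classical
  let e := ((DirectSum.linearEquivFunOnFintype R ι N).conj.restrictScalars K).trans <|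
    (LinearMap.lsum R N K).symm.trans <|
      LinearEquiv.piCongrRight fun i => (LinearEquiv.linearMapPi K).symm
  rw [e.finrank_eq, finrank_pi_fintype]
  exact Finset.sum_congr rfl fun i _ => finrank_pi_fintype K

namespace Module.AEval'

variable {R M : Type*} [CommRing R] [AddCommGroup M] [Module R M]

noncomputable def endEquivCentralizer (φ : Module.End R M) :
    Module.End R[X] (AEval' φ) ≃ₗ[R] Subalgebra.centralizer R {φ} where
  toFun ψ := ⟨(of φ).symm.toLinearMap ∘ₗ ψ.restrictScalars R ∘ₗ (of φ).toLinearMap, by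
    rw [Subalgebra.mem_centralizer_iff]
    rintro _ rfl
    ext m
    simp only [Module.End.mul_apply, LinearMap.comp_apply, LinearEquiv.coe_coe,
      LinearMap.coe_restrictScalars, ← X_smul_of, map_smul, of_symm_X_smul]⟩
  invFun g := LinearMap.ofAEval _ ((of φ).toLinearMap ∘ₗ g) fun m => by
    have hg := (Subalgebra.mem_centralizer_iff R).mp g.2 φ rfl
    rw [LinearMap.comp_apply, LinearMap.comp_apply, LinearEquiv.coe_coe, X_smul_of]
    exact congrArg _ (LinearMap.congr_fun hg m).symm
  map_add' _ _ := rfl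
  map_smul' _ _ := rfl
  left_inv ψ := by ext; simp [LinearMap.ofAEval]
  right_inv g := by ext; simp [LinearMap.ofAEval]

end Module.AEval'

def Subalgebra.centralizerSingletonEquiv {R A B : Type*} [CommSemiring R] [Semiring A]
    [Semiring B] [Algebra R A] [Algebra R B] (e : A ≃ₐ[R] B) (a : A) :
    centralizer R {a} ≃ₐ[R] centralizer R {e a} :=
  (e.subalgebraMap _).trans <| equivOfEq _ _ <| by
    ext b
    simp only [mem_map, mem_centralizer_iff, Set.mem_singleton_iff, forall_eq]
    constructor
    · rintro ⟨x, hx, rfl⟩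
      simp [← map_mul, hx]
    · intro hb
      exact ⟨e.symm b, e.injective (by simp [hb]), e.apply_symm_apply b⟩

open scoped Classical in
open Polynomial in
theorem finrank_centralizer_eq_sum_general
    (K : Type*) [Field K] (n : ℕ) (X : Matrix (Fin n) (Fin n) K)
    (I : Type*) [Fintype I]
    (f : I → Polynomial K) (e : I → ℕ)
    (hmonic : ∀ i, (f i).Monic) (hirr : ∀ i, Irreducible (f i))
    (hiso : Nonempty ((Module.AEval' X.mulVecLin) ≃ₗ[Polynomial K]
      (⨁ i : I, Polynomial K ⧸ Ideal.span {f i ^ e i}))) :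
    Module.finrank K (Subalgebra.centralizer K {X}) =
      ∑ i : I, ∑ j : I,
        if f i = f j then (f i).natDegree * min (e i) (e j) else 0 := by
  classical
  obtain ⟨iso⟩ := hiso
  have hne (j : I) : f j ^ e j ≠ 0 := pow_ne_zero _ (hmonic j).ne_zero
  have (i j : I) := finiteDimensional_linearMap_quotSpanSingleton (f i ^ e i) (hne j)
  rw [((Subalgebra.centralizerSingletonEquiv Matrix.toLinAlgEquiv' X).toLinearEquiv ≪≫ₗ
    (AEval'.endEquivCentralizer X.mulVecLin).symm ≪≫ₗ iso.conj.restrictScalars K).finrank_eq,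
    finrank_end_directSum]
  refine Finset.sum_congr rfl fun i _ => Finset.sum_congr rfl fun j _ => ?_
  rw [finrank_linearMap_quotSpanSingleton _ (hne j)]
  split_ifs with hij
  · rw [hij, natDegree_gcd_pow_pow_self]
  · exact natDegree_gcd_pow_pow_of_ne (hmonic i) (hmonic j) (hirr i) (hirr j) hij _ _

open scoped Classical in
open Polynomial in
/-- If `K^n`, as a `K[x]`-module with `x` acting as `X`, is isomorphic to
`⨁ i, K[x]/(f i ^ e i)` with each `f i` monic irreducible and each `e i` positive, then
`dim Cent(X) = Σ_{(i,j) : f i = f j} deg (f i) * min (e i) (e j)`. -/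
theorem finrank_centralizer_eq_sum
    (K : Type*) [Field K] (n : ℕ) (X : Matrix (Fin n) (Fin n) K)
    (I : Type*) [Fintype I] [DecidableEq I]
    (f : I → Polynomial K) (e : I → ℕ)
    (hmonic : ∀ i, (f i).Monic) (hirr : ∀ i, Irreducible (f i)) (hpos : ∀ i, 0 < e i)
    (hiso : Nonempty ((Module.AEval' X.mulVecLin) ≃ₗ[Polynomial K]
      (⨁ i : I, Polynomial K ⧸ Ideal.span {f i ^ e i}))) :
    Module.finrank K (Subalgebra.centralizer K {X}) =
      ∑ i : I, ∑ j : I,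
        if f i = f j then (f i).natDegree * min (e i) (e j) else 0 :=
  finrank_centralizer_eq_sum_general K n X I f e hmonic hirr hiso
end

section
/- Let K be a field, f ∈ K[x] a monic irreducible polynomial, and X ∈ Mat_n(K) a matrix whose minimal polynomial over K equals f^m for some m ≥ 2. Let r ∈ K[x]. Then r(X) is similar to f(X) if and only if f divides r and f² does not divide r. -/
open Polynomial

namespace Polynomial

variable {K : Type*} [Field K]

theorem eq_zero_of_pow_dvd_sum_mul_pow {f h : K[X]} (hf : Irreducible f) (hfh : f ∣ h)
    (hf2h : ¬ f ^ 2 ∣ h) {e : ℕ} (g : Fin e → K[X]) (hg : ∀ i, (g i).degree < f.degree)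
    (hdvd : f ^ e ∣ ∑ i, g i * h ^ (i : ℕ)) : g = 0 := by
  induction e with
  | zero => exact Subsingleton.elim _ _
  | succ e ih =>
    obtain ⟨u, rfl⟩ := hfh
    have hu : ¬ f ∣ u := fun hu => hf2h (by rw [sq]; exact mul_dvd_mul_left f hu)
    have hsum : ∑ i, g i * (f * u) ^ (i : ℕ)
        = g 0 + f * (u * ∑ i : Fin e, g i.succ * (f * u) ^ (i : ℕ)) := by
      rw [Fin.sum_univ_succ, Finset.mul_sum, Finset.mul_sum]
      simp only [Fin.val_zero, pow_zero, mul_one, Fin.val_succ, pow_succ]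
      exact congrArg (g 0 + ·) (Finset.sum_congr rfl fun i _ => by ring)
    rw [hsum] at hdvd
    have hg0 : g 0 = 0 := by
      refine eq_zero_of_dvd_of_degree_lt ?_ (hg 0)
      exact (dvd_add_left (dvd_mul_right f _)).mp ((dvd_pow_self f e.succ_ne_zero).trans hdvd)
    rw [hg0, zero_add, pow_succ', mul_dvd_mul_iff_left hf.ne_zero] at hdvd
    have hS : f ^ e ∣ ∑ i : Fin e, g i.succ * (f * u) ^ (i : ℕ) :=
      (((hf.coprime_iff_not_dvd.mpr hu).pow_left).dvd_of_dvd_mul_left hdvd)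
    have hsucc := ih (fun i => g i.succ) (fun i => hg _) hS
    funext i
    exact Fin.cases hg0 (fun j => congrFun hsucc j) i

noncomputable def powerExpansion (f h : K[X]) (e : ℕ) :
    (Fin e → degreeLT K f.natDegree) →ₗ[K] K[X] ⧸ K[X] ∙ f ^ e :=
  (K[X] ∙ f ^ e).mkQ.restrictScalars K ∘ₗ
    ∑ i : Fin e, LinearMap.mulRight K (h ^ (i : ℕ)) ∘ₗ (degreeLT K f.natDegree).subtype ∘ₗ
      LinearMap.proj i

theorem powerExpansion_apply (f h : K[X]) (e : ℕ) (g : Fin e → degreeLT K f.natDegree) :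
    powerExpansion f h e g = Submodule.Quotient.mk (∑ i, (g i : K[X]) * h ^ (i : ℕ)) := by
  simp [powerExpansion]

theorem powerExpansion_injective {f h : K[X]} (hf : Irreducible f) (hfh : f ∣ h)
    (hf2h : ¬ f ^ 2 ∣ h) (e : ℕ) : Function.Injective (powerExpansion f h e) := by
  rw [← LinearMap.ker_eq_bot, LinearMap.ker_eq_bot']
  intro g hg
  rw [powerExpansion_apply, Submodule.Quotient.mk_eq_zero, Ideal.mem_span_singleton] at hg
  have hdeg : ∀ i, (g i : K[X]).degree < f.degree := fun i => by
    rw [degree_eq_natDegree hf.ne_zero, ← mem_degreeLT]; exact (g i).2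
  funext i
  exact Subtype.ext (congrFun (eq_zero_of_pow_dvd_sum_mul_pow hf hfh hf2h _ hdeg hg) i)

theorem finrank_quotient_span_pow (f : K[X]) (e : ℕ) :
    Module.finrank K (K[X] ⧸ K[X] ∙ f ^ e) = e * f.natDegree := by
  rw [← natDegree_pow]; exact finrank_quotient_span_eq_natDegree

theorem finrank_fin_fun_degreeLT (e d : ℕ) :
    Module.finrank K (Fin e → degreeLT K d) = e * d := by
  rw [Module.finrank_pi_fintype, (degreeLTEquiv K d).finrank_eq]
  simp

theorem finiteDimensional_quotient_span_pow {f : K[X]} (hf : f ≠ 0) (e : ℕ) :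
    FiniteDimensional K (K[X] ⧸ K[X] ∙ f ^ e) :=
  (AdjoinRoot.powerBasis (pow_ne_zero e hf)).finite

noncomputable def powerExpansionEquiv {f h : K[X]} (hf : Irreducible f) (hfh : f ∣ h)
    (hf2h : ¬ f ^ 2 ∣ h) (e : ℕ) :
    (Fin e → degreeLT K f.natDegree) ≃ₗ[K] K[X] ⧸ K[X] ∙ f ^ e :=
  haveI := finiteDimensional_quotient_span_pow hf.ne_zero e
  (powerExpansion f h e).linearEquivOfInjective (powerExpansion_injective hf hfh hf2h e)
    (by rw [finrank_fin_fun_degreeLT, finrank_quotient_span_pow])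

theorem powerExpansion_cons_zero_init {f h : K[X]} (hfh : f ∣ h) {e : ℕ}
    (g : Fin (e + 1) → degreeLT K f.natDegree) :
    powerExpansion f h (e + 1) (Fin.cons 0 (Fin.init g)) = h • powerExpansion f h (e + 1) g := by
  rw [powerExpansion_apply, powerExpansion_apply, ← Submodule.Quotient.mk_smul, smul_eq_mul,
    ← sub_eq_zero, ← Submodule.Quotient.mk_sub, Submodule.Quotient.mk_eq_zero,
    Ideal.mem_span_singleton, Fin.sum_univ_succ, Fin.sum_univ_castSucc (n := e)]
  simp only [Fin.cons_zero, Fin.cons_succ, Fin.init, ZeroMemClass.coe_zero, zero_mul, zero_add,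
    Fin.val_succ, Fin.val_castSucc, Fin.val_last, mul_add, Finset.mul_sum]
  have hshift : ∑ i : Fin e, (g i.castSucc : K[X]) * h ^ ((i : ℕ) + 1)
      = ∑ i : Fin e, h * ((g i.castSucc : K[X]) * h ^ (i : ℕ)) :=
    Finset.sum_congr rfl fun i _ => by ring
  rw [hshift, sub_add_cancel_left, dvd_neg]
  exact (pow_dvd_pow_of_dvd hfh (e + 1)).trans ⟨g (Fin.last e), by ring⟩

theorem exists_linearEquiv_quotient_pow_smul {f h₁ h₂ : K[X]} (hf : Irreducible f)
    (hfh₁ : f ∣ h₁) (hf2h₁ : ¬ f ^ 2 ∣ h₁) (hfh₂ : f ∣ h₂) (hf2h₂ : ¬ f ^ 2 ∣ h₂) (e : ℕ) :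
    ∃ ψ : (K[X] ⧸ K[X] ∙ f ^ e) ≃ₗ[K] K[X] ⧸ K[X] ∙ f ^ e, ∀ q, ψ (h₁ • q) = h₂ • ψ q := by
  let E₁ := powerExpansionEquiv hf hfh₁ hf2h₁ e
  let E₂ := powerExpansionEquiv hf hfh₂ hf2h₂ e
  refine ⟨E₁.symm.trans E₂, fun q => ?_⟩
  obtain ⟨g, rfl⟩ := E₁.surjective q
  cases e with
  | zero => rw [Subsingleton.elim g 0]; simp only [map_zero, smul_zero]
  | succ e =>
    have h₁g : h₁ • E₁ g = E₁ (Fin.cons 0 (Fin.init g)) :=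
      (powerExpansion_cons_zero_init hfh₁ g).symm
    rw [h₁g, LinearEquiv.trans_apply, LinearEquiv.trans_apply, LinearEquiv.symm_apply_apply,
      LinearEquiv.symm_apply_apply]
    exact powerExpansion_cons_zero_init hfh₂ g

end Polynomial

open DirectSum in
theorem Module.exists_linearEquiv_smul_of_isTorsion' {K M : Type*} [Field K] [AddCommGroup M]
    [Module K[X] M] [Module K M] [IsScalarTower K K[X] M] [Module.Finite K[X] M]
    {f h₁ h₂ : K[X]} (hf : Irreducible f) (hfh₁ : f ∣ h₁) (hf2h₁ : ¬ f ^ 2 ∣ h₁)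
    (hfh₂ : f ∣ h₂) (hf2h₂ : ¬ f ^ 2 ∣ h₂) (hM : Module.IsTorsion' M (Submonoid.powers f)) :
    ∃ T : M ≃ₗ[K] M, ∀ v, T (h₁ • v) = h₂ • T v := by
  obtain ⟨d, k, ⟨E⟩⟩ := Module.torsion_by_prime_power_decomposition hf hM
  choose ψ hψ using fun i =>
    exists_linearEquiv_quotient_pow_smul hf hfh₁ hf2h₁ hfh₂ hf2h₂ (k i)
  refine ⟨(E.restrictScalars K).trans
    ((DFinsupp.mapRange.linearEquiv ψ).trans (E.restrictScalars K).symm), fun v => ?_⟩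
  have hΨ : ∀ w : ⨁ i, K[X] ⧸ K[X] ∙ f ^ k i,
      DFinsupp.mapRange.linearEquiv ψ (h₁ • w) = h₂ • DFinsupp.mapRange.linearEquiv ψ w :=
    fun w => DFinsupp.ext fun i => hψ i (w i)
  simp only [LinearEquiv.trans_apply, LinearEquiv.restrictScalars_apply,
    LinearEquiv.restrictScalars_symm_apply, map_smul, hΨ]

namespace Matrix

variable {K : Type*} [Field K] {n : ℕ}

theorem Similar.pow_eq_zero_iff {A B : Matrix (Fin n) (Fin n) K} (h : A.Similar B) (k : ℕ) :
    A ^ k = 0 ↔ B ^ k = 0 := by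
  obtain ⟨g, rfl⟩ := h
  rw [Units.conj_pow', Units.mul_left_eq_zero, Units.mul_right_eq_zero]

theorem similar_of_linearEquiv {A B : Matrix (Fin n) (Fin n) K}
    (T : (Fin n → K) ≃ₗ[K] Fin n → K) (hT : ∀ v, T (A *ᵥ v) = B *ᵥ T v) : B.Similar A := by
  let g : (Matrix (Fin n) (Fin n) K)ˣ :=
    { val := LinearMap.toMatrix' T.toLinearMap
      inv := LinearMap.toMatrix' T.symm.toLinearMap
      val_inv := by rw [← LinearMap.toMatrix'_comp, T.comp_symm, LinearMap.toMatrix'_id]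
      inv_val := by rw [← LinearMap.toMatrix'_comp, T.symm_comp, LinearMap.toMatrix'_id] }
  refine ⟨g, toLin'.injective (LinearMap.ext fun v => ?_)⟩
  simp [g, toLin'_mul, ← hT]

theorem toLin'_aeval (X : Matrix (Fin n) (Fin n) K) (p : K[X]) :
    aeval (toLin' X) p = toLin' (aeval X p) :=
  aeval_algHom_apply (toLinAlgEquiv' : Matrix (Fin n) (Fin n) K ≃ₐ[K] _).toAlgHom X p

theorem similar_aeval_of_linearEquiv {X : Matrix (Fin n) (Fin n) K} {p q : K[X]}
    (T : Module.AEval' (toLin' X) ≃ₗ[K] Module.AEval' (toLin' X))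
    (hT : ∀ v, T (p • v) = q • T v) : (aeval X q).Similar (aeval X p) := by
  refine similar_of_linearEquiv
    ((Module.AEval'.of _).trans (T.trans (Module.AEval'.of _).symm)) fun v => ?_
  have hmul : ∀ (r : K[X]) (w : Fin n → K), aeval X r *ᵥ w = aeval (toLin' X) r • w :=
    fun r w => by rw [toLin'_aeval, Module.End.smul_def, toLin'_apply]
  rw [LinearEquiv.trans_apply, LinearEquiv.trans_apply, hmul, Module.AEval'.of,
    Module.AEval.of_aeval_smul, hT, Module.AEval.of_symm_smul, hmul]
  rfl

theorem smul_eq_zero_of_aeval_eq_zero {X : Matrix (Fin n) (Fin n) K} {p : K[X]}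
    (hp : aeval X p = 0) (v : Module.AEval' (toLin' X)) : p • v = 0 := by
  obtain ⟨w, rfl⟩ := (Module.AEval'.of (toLin' X)).surjective v
  rw [Module.AEval'.of, ← Module.AEval.of_aeval_smul, toLin'_aeval, hp, map_zero, zero_smul,
    map_zero]

end Matrix

theorem aeval_similar_iff_dvd_not_sq_dvd_general
    (K : Type*) [Field K] (n : ℕ) (X : Matrix (Fin n) (Fin n) K)
    (f : Polynomial K) (hirr : Irreducible f)
    (m : ℕ) (hm : 2 ≤ m) (hmin : minpoly K X = f ^ m)
    (r : Polynomial K) :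
    (Polynomial.aeval X r).Similar (Polynomial.aeval X f) ↔ (f ∣ r ∧ ¬ f ^ 2 ∣ r) := by
  have hzero : ∀ p : K[X], aeval X p = 0 ↔ f ^ m ∣ p := fun p => by
    rw [← hmin, minpoly.dvd_iff]
  have hpow : ∀ {a b : ℕ}, f ^ a ∣ f ^ b ↔ a ≤ b := pow_dvd_pow_iff hirr.ne_zero hirr.not_isUnit
  constructor
  · intro h
    have hnil : ∀ k, f ^ m ∣ r ^ k ↔ m ≤ k := fun k => by
      rw [← hzero, map_pow, h.pow_eq_zero_iff, ← map_pow, hzero, hpow]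
    refine ⟨hirr.prime.dvd_of_dvd_pow ((dvd_pow_self f (by omega)).trans ((hnil m).2 le_rfl)),
      fun hsq => ?_⟩
    have : f ^ m ∣ r ^ (m - 1) := (hpow.2 (by omega : m ≤ 2 * (m - 1))).trans
      (by rw [pow_mul]; exact pow_dvd_pow_of_dvd hsq _)
    exact absurd ((hnil (m - 1)).1 this) (by omega)
  · rintro ⟨⟨s, rfl⟩, hsq⟩
    have htors : Module.IsTorsion' (Module.AEval' (Matrix.toLin' X)) (Submonoid.powers f) :=
      fun v => ⟨⟨f ^ m, m, rfl⟩, Matrix.smul_eq_zero_of_aeval_eq_zero ((hzero _).2 dvd_rfl) v⟩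
    obtain ⟨T, hT⟩ := Module.exists_linearEquiv_smul_of_isTorsion' hirr dvd_rfl
      (by simpa using (hpow (a := 2) (b := 1)).not) (dvd_mul_right f s) hsq htors
    exact Matrix.similar_aeval_of_linearEquiv T hT

/-- Let `X` have minimal polynomial `f ^ m` with `f` monic irreducible and `m ≥ 2`.
Then `r(X)` is similar to `f(X)` if and only if `f ∣ r` and `f² ∤ r`. -/
theorem aeval_similar_iff_dvd_not_sq_dvd
    (K : Type*) [Field K] (n : ℕ) (X : Matrix (Fin n) (Fin n) K)
    (f : Polynomial K) (hmonic : f.Monic) (hirr : Irreducible f)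
    (m : ℕ) (hm : 2 ≤ m) (hmin : minpoly K X = f ^ m)
    (r : Polynomial K) :
    (Polynomial.aeval X r).Similar (Polynomial.aeval X f) ↔ (f ∣ r ∧ ¬ f ^ 2 ∣ r) :=
  aeval_similar_iff_dvd_not_sq_dvd_general K n X f hirr m hm hmin r
end

section
/- Let K be a field and X, Y ∈ Mat_n(K) with Cent(X) = Cent(Y). Then the set of nonzero subspaces of K^n of the form ker(f(X)^n), as f ranges over the monic irreducible polynomials of K[x], equals the set of nonzero subspaces of the form ker(g(Y)^n), as g ranges over the monic irreducible polynomials of K[x]. (These are exactly the summands of the primary decompositions of K^n as a K[x]-module via X and via Y, respectively.) -/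
open Polynomial Module

/-!
For an irreducible `f`, the projection onto the `f`-primary component of `φ` is a polynomial in
`φ`, hence lies in the centre of the centralizer `C` of `φ`, and it cannot be split into two
nonzero orthogonal idempotents of that centre: two nonzero `f`-primary `K[X]`-modules always admit
a nonzero homomorphism (the first has `K[X]/(f)` as a quotient, the second as a submodule), and
such a homomorphism is an element of `C` that does not commute with the splitting. When `C` is
also the centralizer of `ψ`, the primary projections of `ψ` lie in the same commutative algebra,
so each primary component of `φ` lies inside a primary component of `ψ`; by symmetry, and since
distinct primary components are disjoint, they coincide.
-/

section ModuleTheory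

variable {R M N : Type*} [CommRing R] [AddCommGroup M] [Module R M] [AddCommGroup N] [Module R N]

theorem exists_ne_zero_smul_eq_zero_of_pow_smul_eq_zero {f : R} {m : M} (hm : m ≠ 0) {k : ℕ}
    (hk : f ^ k • m = 0) : ∃ b : M, b ≠ 0 ∧ f • b = 0 := by
  induction k generalizing m with
  | zero => exact absurd (by simpa using hk) hm
  | succ k ih =>
    by_cases hfm : f • m = 0
    · exact ⟨m, hm, hfm⟩
    · exact ih hfm (by rwa [← mul_smul, ← pow_succ])

theorem exists_linearMap_ne_zero_of_pow_smul_eq_zero [IsNoetherian R M] [Nontrivial M]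
    [Nontrivial N] {f : R} (hf : (Ideal.span {f}).IsMaximal) {k l : ℕ}
    (hM : ∀ m : M, f ^ k • m = 0) (hN : ∀ n : N, f ^ l • n = 0) :
    ∃ w : M →ₗ[R] N, w ≠ 0 := by
  obtain ⟨n, hn⟩ := exists_ne (0 : N)
  obtain ⟨b, hb, hfb⟩ := exists_ne_zero_smul_eq_zero_of_pow_smul_eq_zero hn (hN n)
  obtain ⟨P, hP⟩ := IsCoatomic.exists_coatom (Submodule R M)
  have := isSimpleModule_iff_isCoatom.2 hP
  obtain ⟨I, hI, ⟨e⟩⟩ := isSimpleModule_iff_quot_maximal.1 this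
  have hI_eq : Ideal.span {f} = I := by
    have hfkI : f ^ k • (1 : R ⧸ I) = 0 := by
      obtain ⟨m, hm⟩ := P.mkQ_surjective (e.symm 1)
      rw [← e.apply_symm_apply 1, ← hm, ← map_smul, ← map_smul, hM, map_zero, map_zero]
    have hfI : f ∈ I := hI.isPrime.mem_of_pow_mem k <| by
      simpa only [Algebra.smul_def, mul_one, Ideal.Quotient.algebraMap_eq,
        Ideal.Quotient.eq_zero_iff_mem] using hfkI
    exact hf.eq_of_le hI.ne_top ((Ideal.span_singleton_le_iff_mem I).2 hfI)
  let j : (R ⧸ I) →ₗ[R] N := I.liftQ (LinearMap.toSpanSingleton R N b) <| by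
    rw [← hI_eq, Ideal.span_le, Set.singleton_subset_iff]
    exact hfb
  have hg : Function.Injective (j ∘ₗ e.toLinearMap) := by
    refine (LinearMap.injective_or_eq_zero _).resolve_right fun h => hb ?_
    simpa only [LinearMap.comp_apply, LinearEquiv.coe_coe, LinearEquiv.apply_symm_apply, j,
      Submodule.liftQ_apply, LinearMap.toSpanSingleton_apply, one_smul, LinearMap.zero_apply]
      using LinearMap.congr_fun h (e.symm (Submodule.Quotient.mk 1))
  obtain ⟨m, hm⟩ := SetLike.exists_of_lt hP.lt_top
  refine ⟨j ∘ₗ e.toLinearMap ∘ₗ P.mkQ, fun h => hm.2 ?_⟩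
  rw [← Submodule.Quotient.mk_eq_zero, ← hg.eq_iff, map_zero]
  exact LinearMap.congr_fun h m

theorem exists_ne_zero_mul_eq_of_isIdempotentElem [IsNoetherian R M] {f : R}
    (hf : (Ideal.span {f}).IsMaximal) {k : ℕ} {e₁ e₂ : Module.End R M}
    (he₁ : IsIdempotentElem e₁) (he₂ : IsIdempotentElem e₂) (h₁ : e₁ ≠ 0) (h₂ : e₂ ≠ 0)
    (hk₁ : f ^ k • e₁ = 0) (hk₂ : f ^ k • e₂ = 0) :
    ∃ w : Module.End R M, w ≠ 0 ∧ w * e₁ = w ∧ e₂ * w = w := by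
  have : Nontrivial (LinearMap.range e₁) :=
    Submodule.nontrivial_iff_ne_bot.2 (LinearMap.range_eq_bot.not.2 h₁)
  have : Nontrivial (LinearMap.range e₂) :=
    Submodule.nontrivial_iff_ne_bot.2 (LinearMap.range_eq_bot.not.2 h₂)
  have kill {e : Module.End R M} (hk : f ^ k • e = 0) (m : LinearMap.range e) : f ^ k • m = 0 := by
    obtain ⟨_, x, rfl⟩ := m
    exact Subtype.ext (LinearMap.congr_fun hk x)
  obtain ⟨w, hw⟩ := exists_linearMap_ne_zero_of_pow_smul_eq_zero hf (kill hk₁) (kill hk₂)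
  refine ⟨(LinearMap.range e₂).subtype ∘ₗ w ∘ₗ e₁.rangeRestrict, ?_, ?_, ?_⟩
  · obtain ⟨⟨_, x, rfl⟩, hx⟩ := DFunLike.ne_iff.1 hw
    exact DFunLike.ne_iff.2 ⟨x, fun h => hx (Subtype.ext h)⟩
  · ext x
    simp only [LinearMap.comp_apply, Module.End.mul_apply]
    congr 2
    exact Subtype.ext (LinearMap.congr_fun he₁.eq x)
  · ext x
    obtain ⟨y, hy⟩ := (w (e₁.rangeRestrict x)).2
    simp only [LinearMap.comp_apply, Module.End.mul_apply, Submodule.subtype_apply, ← hy]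
    exact LinearMap.congr_fun he₂.eq y

end ModuleTheory

theorem aeval_mem_centralizer_centralizer {R A : Type*} [CommSemiring R] [Semiring A]
    [Algebra R A] (a : A) (p : R[X]) : aeval a p ∈ Set.centralizer (Set.centralizer {a}) :=
  Algebra.adjoin_le_centralizer_centralizer R {a} (aeval_mem_adjoin_singleton R a)

section EndomorphismAlgebra

variable {K V : Type*} [Field K] [AddCommGroup V] [Module K V]

section AEval

variable {φ E : Module.End K V}

noncomputable def endAEvalOfCommute (h : Commute E φ) : Module.End K[X] (AEval' φ) :=
  LinearMap.ofAEval φ ((AEval'.of φ).toLinearMap ∘ₗ E) fun m => by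
    simp only [LinearMap.comp_apply, LinearEquiv.coe_coe, Module.End.smul_def,
      AEval'.X_smul_of, ← Module.End.mul_apply, h.eq]

@[simp]
theorem endAEvalOfCommute_apply (h : Commute E φ) (x : AEval' φ) :
    endAEvalOfCommute h x = AEval'.of φ (E ((AEval'.of φ).symm x)) :=
  rfl

theorem isIdempotentElem_endAEvalOfCommute (h : Commute E φ) (he : IsIdempotentElem E) :
    IsIdempotentElem (endAEvalOfCommute h) :=
  LinearMap.ext fun x => by
    simpa [Module.End.mul_apply] using
      congr(AEval'.of φ $(LinearMap.congr_fun he.eq ((AEval'.of φ).symm x)))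

theorem endAEvalOfCommute_ne_zero (h : Commute E φ) (hE : E ≠ 0) : endAEvalOfCommute h ≠ 0 := by
  obtain ⟨v, hv⟩ := DFunLike.ne_iff.1 hE
  exact DFunLike.ne_iff.2 ⟨AEval'.of φ v, by simpa using hv⟩

theorem smul_endAEvalOfCommute_eq_zero (h : Commute E φ) {p : K[X]} (hp : aeval φ p * E = 0) :
    p • endAEvalOfCommute h = 0 :=
  LinearMap.ext fun x => by simp [← AEval.of_aeval_smul, ← Module.End.mul_apply, hp]

theorem exists_commute_ne_zero_mul_eq_of_isIdempotentElem [FiniteDimensional K V]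
    {f : K[X]} (hf : Irreducible f) {k : ℕ} {E₁ E₂ : Module.End K V}
    (hE₁ : Commute E₁ φ) (hE₂ : Commute E₂ φ)
    (he₁ : IsIdempotentElem E₁) (he₂ : IsIdempotentElem E₂) (h₁ : E₁ ≠ 0) (h₂ : E₂ ≠ 0)
    (hk₁ : aeval φ f ^ k * E₁ = 0) (hk₂ : aeval φ f ^ k * E₂ = 0) :
    ∃ W : Module.End K V, Commute W φ ∧ W ≠ 0 ∧ W * E₁ = W ∧ E₂ * W = W := by
  rw [← map_pow] at hk₁ hk₂
  obtain ⟨w, hw0, hw₁, hw₂⟩ := exists_ne_zero_mul_eq_of_isIdempotentElem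
    (PrincipalIdealRing.isMaximal_of_irreducible hf)
    (isIdempotentElem_endAEvalOfCommute hE₁ he₁) (isIdempotentElem_endAEvalOfCommute hE₂ he₂)
    (endAEvalOfCommute_ne_zero hE₁ h₁) (endAEvalOfCommute_ne_zero hE₂ h₂)
    (smul_endAEvalOfCommute_eq_zero hE₁ hk₁) (smul_endAEvalOfCommute_eq_zero hE₂ hk₂)
  let of := AEval'.of φ
  refine ⟨of.symm.conj (w.restrictScalars K), ?_, ?_, ?_, ?_⟩
  · ext v
    simp [of, Module.End.mul_apply, ← AEval'.X_smul_of]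
  · obtain ⟨x, hx⟩ := DFunLike.ne_iff.1 hw0
    exact DFunLike.ne_iff.2 ⟨of.symm x, by simpa [of] using hx⟩
  · ext v
    simpa [of, Module.End.mul_apply] using congr(of.symm ($hw₁ (of v)))
  · ext v
    simpa [of, Module.End.mul_apply] using congr(of.symm ($hw₂ (of v)))

end AEval

theorem exists_isIdempotentElem_aeval_range_eq_ker [FiniteDimensional K V] (φ : Module.End K V)
    {f : K[X]} (hf : Irreducible f) :
    ∃ s : K[X], IsIdempotentElem (aeval φ s) ∧
      LinearMap.range (aeval φ s) = LinearMap.ker (aeval φ f ^ finrank K V) := by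
  set N := finrank K V
  obtain ⟨r, hχ, hfr⟩ := (FiniteMultiplicity.of_not_isUnit hf.not_isUnit
    φ.charpoly_monic.ne_zero).exists_eq_pow_mul_and_not_dvd
  set k := multiplicity f φ.charpoly
  have hkN : k ≤ N := by
    have := natDegree_le_of_dvd (Dvd.intro r hχ.symm) φ.charpoly_monic.ne_zero
    rw [LinearMap.charpoly_natDegree, natDegree_pow] at this
    nlinarith [hf.natDegree_pos]
  have hχ_dvd : aeval φ (f ^ N * r) = 0 := by
    obtain ⟨c, hc⟩ : φ.charpoly ∣ f ^ N * r := by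
      rw [hχ, ← Nat.sub_add_cancel hkN, pow_add, mul_assoc]
      exact dvd_mul_left _ _
    rw [hc, map_mul, LinearMap.aeval_self_charpoly, zero_mul]
  obtain ⟨a, b, hab⟩ := ((hf.coprime_iff_not_dvd.2 hfr).pow_left (m := N))
  refine ⟨b * r, ?_, le_antisymm ?_ fun v hv => ?_⟩
  · have : (b * r) * (b * r) = b * r - a * b * (f ^ N * r) := by linear_combination (b * r) * hab
    rw [IsIdempotentElem, ← map_mul, this, map_sub, map_mul (aeval φ) (a * b), hχ_dvd, mul_zero,
      sub_zero]
  · rw [LinearMap.range_le_ker_iff, ← Module.End.mul_eq_comp, ← map_pow, ← map_mul,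
      mul_left_comm, map_mul, hχ_dvd, mul_zero]
  · have : aeval φ (a * f ^ N) v + aeval φ (b * r) v = v := by
      rw [← LinearMap.add_apply, ← map_add, hab, map_one, Module.End.one_apply]
    rw [map_mul, map_pow, Module.End.mul_apply, LinearMap.mem_ker.1 hv, map_zero, zero_add] at this
    exact ⟨v, this⟩

theorem exists_monic_irreducible_aeval_aeval_apply_eq_zero (ψ : Module.End K V) {v : V}
    (hv : v ≠ 0) {a : K[X]} (ha : a ≠ 0) (hav : aeval ψ a v = 0) :
    ∃ g : K[X], g.Monic ∧ Irreducible g ∧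
      ∃ u : K[X], aeval ψ u v ≠ 0 ∧ aeval ψ g (aeval ψ u v) = 0 := by
  induction a using WfDvdMonoid.induction_on_irreducible with
  | zero => exact absurd rfl ha
  | unit u hu =>
    obtain ⟨c, hc, rfl⟩ := Polynomial.isUnit_iff.1 hu
    simp [hc.ne_zero, hv] at hav
  | mul b i hb hi ih =>
    by_cases hbv : aeval ψ b v = 0
    · exact ih hb hbv
    refine ⟨i * C i.leadingCoeff⁻¹, monic_mul_leadingCoeff_inv hi.ne_zero,
      (irreducible_mul_isUnit (isUnit_C.2 (by simpa using hi.ne_zero))).2 hi, b, hbv, ?_⟩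
    have hiav : aeval ψ i (aeval ψ b v) = 0 := by rwa [← Module.End.mul_apply, ← map_mul]
    simp [Module.End.mul_apply, hiav]

theorem mul_eq_right_of_mem_centralizer_centralizer [FiniteDimensional K V]
    {φ p q : Module.End K V} {f : K[X]} (hf : Irreducible f) {k : ℕ}
    (hp : p ∈ Set.centralizer (Set.centralizer {φ}))
    (hq : q ∈ Set.centralizer (Set.centralizer {φ}))
    (hpi : IsIdempotentElem p) (hqi : IsIdempotentElem q) (hk : aeval φ f ^ k * p = 0)
    (hqp : q * p ≠ 0) : q * p = p := by
  let Z := Subalgebra.centralizer K (Set.centralizer {φ})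
  change p ∈ Z at hp
  change q ∈ Z at hq
  have hφ : φ ∈ Set.centralizer {φ} := by simp [Set.mem_centralizer_iff]
  have commute_φ {E : Module.End K V} (hE : E ∈ Z) : Commute E φ := (hE φ hφ).symm
  have hpq : Commute p q := Set.centralizer_centralizer_comm_of_comm (by simp) p hp q hq
  by_contra hne
  have hE₂ : (1 - q) * p ≠ 0 := by rwa [sub_mul, one_mul, sub_ne_zero, ne_comm]
  have hk' {E : Module.End K V} (hE : Commute p E) : aeval φ f ^ k * (E * p) = 0 := by
    rw [← hE.eq, ← mul_assoc, hk, zero_mul]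
  have hp₁ : Commute p (1 - q) := (Commute.one_right p).sub_right hpq
  obtain ⟨W, hWφ, hW0, hW₁, hW₂⟩ := exists_commute_ne_zero_mul_eq_of_isIdempotentElem hf
    (commute_φ (mul_mem hq hp)) (commute_φ (mul_mem (sub_mem (one_mem Z) hq) hp))
    (hqi.mul_of_commute hpq.symm hpi) (hqi.one_sub.mul_of_commute hp₁.symm hpi)
    hqp hE₂ (hk' hpq) (hk' hp₁)
  have hW : W ∈ Set.centralizer {φ} := by simpa [Set.mem_centralizer_iff] using hWφ.eq.symm
  have h₂₁ : (1 - q) * p * (q * p) = 0 := by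
    calc (1 - q) * p * (q * p) = (1 - q) * (p * q) * p := by noncomm_ring
      _ = (1 - q) * q * (p * p) := by rw [hpq.eq]; noncomm_ring
      _ = 0 := by rw [sub_mul, one_mul, hqi.eq, sub_self, zero_mul]
  apply hW0
  calc W = (1 - q) * p * (W * (q * p)) := by rw [hW₁, hW₂]
    _ = (1 - q) * p * (q * p) * W := by rw [mul_mem hq hp W hW]; simp only [mul_assoc]
    _ = 0 := by rw [h₂₁, zero_mul]

noncomputable def primaryComponent (φ : Module.End K V) (f : K[X]) : Submodule K V :=
  LinearMap.ker (aeval φ f ^ finrank K V)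

def primaryComponents (φ : Module.End K V) : Set (Submodule K V) :=
  {U | U ≠ ⊥ ∧ ∃ f : K[X], f.Monic ∧ Irreducible f ∧ U = primaryComponent φ f}

theorem disjoint_primaryComponent (φ : Module.End K V) {f g : K[X]} (hf : f.Monic)
    (hfi : Irreducible f) (hg : g.Monic) (hgi : Irreducible g) (hfg : f ≠ g) :
    Disjoint (primaryComponent φ f) (primaryComponent φ g) := by
  have hcop : IsCoprime f g := hfi.coprime_iff_not_dvd.2 fun h =>
    hfg (eq_of_monic_of_associated hf hg (hfi.associated_of_dvd hgi h))
  rw [primaryComponent, primaryComponent, ← map_pow, ← map_pow]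
  exact disjoint_ker_aeval_of_isCoprime φ hcop.pow

theorem exists_primaryComponent_le [FiniteDimensional K V] {φ ψ : Module.End K V}
    (hc : Set.centralizer {φ} = Set.centralizer {ψ}) {f : K[X]} (hf : Irreducible f)
    (hU : primaryComponent φ f ≠ ⊥) :
    ∃ g : K[X], g.Monic ∧ Irreducible g ∧ primaryComponent φ f ≤ primaryComponent ψ g := by
  have comm := Set.centralizer_centralizer_comm_of_comm (S := {φ}) (by simp)
  have hψ (t : K[X]) : aeval ψ t ∈ Set.centralizer (Set.centralizer {φ}) :=
    hc ▸ aeval_mem_centralizer_centralizer ψ t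
  obtain ⟨s, hs, hs_range⟩ := exists_isIdempotentElem_aeval_range_eq_ker φ hf
  obtain ⟨v, hv, hv0⟩ := Submodule.exists_mem_ne_zero_of_ne_bot hU
  obtain ⟨g, hg, hgi, u, hw0, hgw⟩ := exists_monic_irreducible_aeval_aeval_apply_eq_zero ψ hv0
    ψ.charpoly_monic.ne_zero (by rw [LinearMap.aeval_self_charpoly, LinearMap.zero_apply])
  obtain ⟨t, ht, ht_range⟩ := exists_isIdempotentElem_aeval_range_eq_ker ψ hgi
  set w := aeval ψ u v with hw
  have hpw : aeval φ s w = w := by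
    rw [← LinearMap.IsIdempotentElem.mem_range_iff hs, hs_range, LinearMap.mem_ker, ← map_pow, hw,
      ← Module.End.mul_apply, comm _ (aeval_mem_centralizer_centralizer φ _) _ (hψ u),
      Module.End.mul_apply, map_pow, LinearMap.mem_ker.1 hv, map_zero]
  have hqw : aeval ψ t w = w := by
    have hN : 0 < finrank K V := Module.finrank_pos_iff_exists_ne_zero.2 ⟨v, hv0⟩
    rw [← LinearMap.IsIdempotentElem.mem_range_iff ht, ht_range, LinearMap.mem_ker,
      ← Nat.sub_add_cancel hN, pow_succ, Module.End.mul_apply, hgw, map_zero]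
  refine ⟨g, hg, hgi, ?_⟩
  rw [primaryComponent, primaryComponent, ← hs_range, ← ht_range,
    ← LinearMap.IsIdempotentElem.comp_eq_right_iff ht, ← Module.End.mul_eq_comp]
  refine mul_eq_right_of_mem_centralizer_centralizer hf (aeval_mem_centralizer_centralizer φ s)
    (hψ t) hs ht (LinearMap.range_le_ker_iff.1 hs_range.le) fun h => hw0 ?_
  rw [← hqw, ← hpw, ← Module.End.mul_apply, h, LinearMap.zero_apply]

theorem primaryComponents_subset_of_centralizer_eq [FiniteDimensional K V]
    {φ ψ : Module.End K V} (hc : Set.centralizer {φ} = Set.centralizer {ψ}) :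
    primaryComponents φ ⊆ primaryComponents ψ := by
  rintro _ ⟨hU, f, hf, hfi, rfl⟩
  obtain ⟨g, hg, hgi, hfg⟩ := exists_primaryComponent_le hc hfi hU
  obtain ⟨f', hf', hfi', hgf'⟩ :=
    exists_primaryComponent_le hc.symm hgi (ne_bot_of_le_ne_bot hU hfg)
  obtain rfl : f = f' := by
    by_contra hne
    exact hU ((disjoint_primaryComponent φ hf hfi hf' hfi' hne).eq_bot_of_le (hfg.trans hgf'))
  exact ⟨hU, g, hg, hgi, le_antisymm hfg hgf'⟩

theorem primaryComponents_eq_of_centralizer_eq [FiniteDimensional K V]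
    {φ ψ : Module.End K V} (hc : Set.centralizer {φ} = Set.centralizer {ψ}) :
    primaryComponents φ = primaryComponents ψ :=
  (primaryComponents_subset_of_centralizer_eq hc).antisymm
    (primaryComponents_subset_of_centralizer_eq hc.symm)

end EndomorphismAlgebra

/-- If `X` and `Y` have equal centralizers, then the nonzero subspaces `ker (f(X)^n)`,
for `f` monic irreducible, coincide with the nonzero subspaces `ker (g(Y)^n)`, for `g`
monic irreducible: the primary decompositions of `K^n` under `X` and `Y` have the same
summands. -/
theorem primary_components_eq_of_cent_eq
    (K : Type*) [Field K] (n : ℕ) (X Y : Matrix (Fin n) (Fin n) K)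
    (hc : {W : Matrix (Fin n) (Fin n) K | W * X = X * W} =
          {W : Matrix (Fin n) (Fin n) K | W * Y = Y * W}) :
    {V : Submodule K (Fin n → K) | V ≠ ⊥ ∧ ∃ f : Polynomial K, f.Monic ∧ Irreducible f ∧
        V = LinearMap.ker ((Polynomial.aeval X f ^ n).mulVecLin)} =
    {V : Submodule K (Fin n → K) | V ≠ ⊥ ∧ ∃ g : Polynomial K, g.Monic ∧ Irreducible g ∧
        V = LinearMap.ker ((Polynomial.aeval Y g ^ n).mulVecLin)} := by
  let e := Matrix.toLinAlgEquiv' (R := K) (n := Fin n)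
  have hprim (Z : Matrix (Fin n) (Fin n) K) (f : K[X]) :
      primaryComponent (e Z) f = LinearMap.ker ((aeval Z f ^ n).mulVecLin) := by
    rw [primaryComponent, finrank_fin_fun, aeval_algHom_apply e, ← map_pow]
    rfl
  have hc' : Set.centralizer {e X} = Set.centralizer {e Y} := by
    ext E
    obtain ⟨M, rfl⟩ := e.surjective E
    simpa [Set.mem_centralizer_iff, ← map_mul, e.injective.eq_iff, eq_comm] using Set.ext_iff.1 hc M
  simpa only [primaryComponents, hprim] using primaryComponents_eq_of_centralizer_eq hc'
end

section
/- Let K be a field, f ∈ K[x] a monic irreducible separable polynomial of degree d, and L a splitting field of f over K in which f has the distinct roots α_1, …, α_d. Let I be a finite index set, e_i positive integers, and X ∈ Mat_n(K) such that K^n as a K[x]-module via X is isomorphic to ⊕_{i∈I} K[x]/(f^{e_i}). Then L^n, as an L[x]-module with x acting as the entrywise image of X in Mat_n(L), is isomorphic to ⊕_{j=1}^{d} ⊕_{i∈I} L[x]/((x−α_j)^{e_i}). -/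
/-!
Extending scalars from `K` to `L` turns the `K[x]`-module `K^n` given by `X` into `L ⊗[K] K^n`
with `x` acting by `1 ⊗ X`, which is the `L[x]`-module `L^n` given by the image of `X`. The
hypothesis identifies it with `L ⊗[K] ⨁ K[x]/(f ^ e i)`. Tensoring commutes with finite sums and
`L ⊗[K] K[x]/J ≃ L[x]/J L[x]`, so this is `⨁ L[x]/(f ^ e i)`. Over `L` the image of `f ^ e i`
is `∏ j, (x - α j) ^ e i`, a product of pairwise coprime factors since the `α j` are distinct,
and the Chinese remainder theorem splits each summand.
-/

open scoped DirectSum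

open Function Polynomial TensorProduct Module

namespace Module.AEval'

variable {R M N : Type*} [CommSemiring R] [AddCommMonoid M] [Module R M]
  [AddCommMonoid N] [Module R N] {φ : M →ₗ[R] M} {ψ : N →ₗ[R] N}

noncomputable def congr (e : M ≃ₗ[R] N) (h : e.toLinearMap ∘ₗ φ = ψ ∘ₗ e) :
    AEval' φ ≃ₗ[R[X]] AEval' ψ :=
  LinearEquiv.ofAEval _ (e.trans (of ψ)) fun m => by
    rw [LinearEquiv.trans_apply, LinearEquiv.trans_apply, X_smul_of]
    exact congrArg (of ψ) (LinearMap.congr_fun h m)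

noncomputable def piMapEquiv {ι : Type*} {M : ι → Type*} [∀ i, AddCommMonoid (M i)]
    [∀ i, Module R (M i)] (φ : ∀ i, M i →ₗ[R] M i) :
    AEval' (LinearMap.piMap φ) ≃ₗ[R[X]] ∀ i, AEval' (φ i) :=
  LinearEquiv.ofAEval _ (LinearEquiv.piCongrRight fun i => of (φ i)) fun m => by
    funext i
    exact (X_smul_of (φ i) (m i)).symm

theorem of_trans_restrictScalars_comp [Module R[X] N] [IsScalarTower R R[X] N]
    (g : AEval' φ ≃ₗ[R[X]] N) :
    ((of φ).trans (g.restrictScalars R)).toLinearMap ∘ₗ φ =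
      DistribSMul.toLinearMap R N (X : R[X]) ∘ₗ (of φ).trans (g.restrictScalars R) := by
  ext m
  simp [← X_smul_of]

end Module.AEval'

section BaseChange

variable {R : Type*} (A : Type*) [CommSemiring R] [CommSemiring A] [Algebra R A]

theorem TensorProduct.piRight_comp_baseChange_piMap {ι : Type*} [Fintype ι] [DecidableEq ι]
    {M : ι → Type*} [∀ i, AddCommMonoid (M i)] [∀ i, Module R (M i)]
    (φ : ∀ i, M i →ₗ[R] M i) :
    (piRight R A A M).toLinearMap ∘ₗ (LinearMap.piMap φ).baseChange A =
      LinearMap.piMap (fun i => (φ i).baseChange A) ∘ₗ (piRight R A A M).toLinearMap := by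
  ext m i
  simp

theorem Matrix.piScalarRight_comp_baseChange_mulVecLin {m n : Type*} [Fintype m] [DecidableEq m]
    [Fintype n] [DecidableEq n] (B : Matrix m n R) :
    (piScalarRight R A A m).toLinearMap ∘ₗ B.mulVecLin.baseChange A =
      (B.map (algebraMap R A)).mulVecLin ∘ₗ (piScalarRight R A A n).toLinearMap := by
  ext v i
  simp [Matrix.mulVec, dotProduct, Pi.single_apply, Algebra.algebraMap_eq_smul_one]

noncomputable def Matrix.aevalMapEquivBaseChange {n : Type*} [Fintype n] [DecidableEq n]
    (B : Matrix n n R) :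
    AEval' (B.map (algebraMap R A)).mulVecLin ≃ₗ[A[X]] AEval' (B.mulVecLin.baseChange A) :=
  (AEval'.congr _ (B.piScalarRight_comp_baseChange_mulVecLin A)).symm

namespace Module.AEval'

variable {M N : Type*} [AddCommMonoid M] [Module R M] [AddCommMonoid N] [Module R N]
  {φ : M →ₗ[R] M} {ψ : N →ₗ[R] N}

noncomputable def baseChangeCongr (e : M ≃ₗ[R] N) (h : e.toLinearMap ∘ₗ φ = ψ ∘ₗ e) :
    AEval' (φ.baseChange A) ≃ₗ[A[X]] AEval' (ψ.baseChange A) :=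
  congr (e.baseChange R A M N) <| by
    rw [LinearEquiv.coe_baseChange, ← LinearMap.baseChange_comp, h, LinearMap.baseChange_comp]

noncomputable def baseChangeEquivOfEquiv [Module R[X] N] [IsScalarTower R R[X] N]
    (g : AEval' φ ≃ₗ[R[X]] N) :
    AEval' (φ.baseChange A) ≃ₗ[A[X]]
      AEval' ((DistribSMul.toLinearMap R N (X : R[X])).baseChange A) :=
  baseChangeCongr A _ (of_trans_restrictScalars_comp g)

noncomputable def baseChangePiMapEquiv {ι : Type*} [Fintype ι] [DecidableEq ι] {M : ι → Type*}
    [∀ i, AddCommMonoid (M i)] [∀ i, Module R (M i)] (φ : ∀ i, M i →ₗ[R] M i) :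
    AEval' ((LinearMap.piMap φ).baseChange A) ≃ₗ[A[X]] ∀ i, AEval' ((φ i).baseChange A) :=
  (congr _ (piRight_comp_baseChange_piMap A φ)).trans (piMapEquiv _)

end Module.AEval'

end BaseChange

section Quotient

variable {R : Type*} (A : Type*) [CommRing R] [CommRing A] [Algebra R A]

noncomputable def Ideal.tensorQuotientEquivQuotientMap (I : Ideal R[X]) :
    A ⊗[R] (R[X] ⧸ I) ≃ₐ[A] A[X] ⧸ I.map (mapRingHom (algebraMap R A)) :=
  (Algebra.TensorProduct.tensorQuotientEquiv A R[X] A I).trans <|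
    Ideal.quotientEquivAlg _ _ (polyEquivTensor' R A).symm <| by
      rw [← Ideal.map_coe (F := R[X] →ₐ[R] _), Ideal.map_map]
      congr 1
      ext <;> simp

theorem Ideal.tensorQuotientEquivQuotientMap_tmul (I : Ideal R[X]) (a : A) (p : R[X]) :
    I.tensorQuotientEquivQuotientMap A (a ⊗ₜ Ideal.Quotient.mk I p) =
      Ideal.Quotient.mk _ (a • p.map (algebraMap R A)) :=
  rfl

noncomputable def Ideal.aevalBaseChangeQuotientEquiv (I : Ideal R[X]) :
    AEval' ((DistribSMul.toLinearMap R (R[X] ⧸ I) (X : R[X])).baseChange A) ≃ₗ[A[X]]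
      A[X] ⧸ I.map (mapRingHom (algebraMap R A)) :=
  LinearEquiv.ofAEval _ (I.tensorQuotientEquivQuotientMap A).toLinearEquiv fun t => by
    induction t with
    | zero => simp
    | add t u ht hu => simp only [smul_add, map_add, ht, hu]
    | tmul a q =>
      obtain ⟨p, rfl⟩ := Ideal.Quotient.mk_surjective q
      change I.tensorQuotientEquivQuotientMap A (a ⊗ₜ Ideal.Quotient.mk I (X * p)) =
        X • I.tensorQuotientEquivQuotientMap A (a ⊗ₜ Ideal.Quotient.mk I p)
      rw [Ideal.tensorQuotientEquivQuotientMap_tmul, Ideal.tensorQuotientEquivQuotientMap_tmul,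
        Polynomial.map_mul, Polynomial.map_X, ← mul_smul_comm, map_mul]
      rfl

end Quotient

noncomputable def Ideal.quotientSpanProdEquivPi {R ι : Type*} [CommRing R] [Fintype ι]
    (a : ι → R) (ha : Pairwise (IsCoprime on a)) :
    (R ⧸ Ideal.span {∏ i, a i}) ≃ₗ[R] ∀ i, R ⧸ Ideal.span {a i} :=
  (Submodule.quotEquivOfEq _ _ (Ideal.iInf_span_singleton ha).symm).trans
    (AlgEquiv.ofRingEquiv (f := Ideal.quotientInfRingEquivPiQuotient _ fun _ _ hij =>
      (Ideal.isCoprime_span_singleton_iff _ _).mpr (ha hij)) fun _ => rfl).toLinearEquiv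

def LinearEquiv.piCurrySwap (R : Type*) [Semiring R] {ι κ : Type*} (M : κ → ι → Type*)
    [∀ j i, AddCommMonoid (M j i)] [∀ j i, Module R (M j i)] :
    (∀ i j, M j i) ≃ₗ[R] ∀ p : κ × ι, M p.1 p.2 where
  toFun f p := f p.2 p.1
  invFun g i j := g (j, i)
  map_add' _ _ := rfl
  map_smul' _ _ := rfl

theorem baseChange_type_separable_general
    (K L : Type*) [Field K] [Field L] [Algebra K L]
    (n : ℕ) (X : Matrix (Fin n) (Fin n) K)
    (f : Polynomial K)
    (d : ℕ)
    (α : Fin d → L) (hinj : Function.Injective α)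
    (hfactor : f.map (algebraMap K L) =
      ∏ j : Fin d, (Polynomial.X - Polynomial.C (α j)))
    (I : Type*) [Fintype I] [DecidableEq I] (e : I → ℕ)
    (hX : Nonempty ((Module.AEval' X.mulVecLin) ≃ₗ[Polynomial K]
      (⨁ i : I, Polynomial K ⧸ Ideal.span {f ^ e i}))) :
    Nonempty ((Module.AEval' (X.map (algebraMap K L)).mulVecLin) ≃ₗ[Polynomial L]
      (⨁ p : Fin d × I,
        Polynomial L ⧸ Ideal.span
          {(Polynomial.X - Polynomial.C (α p.1)) ^ e p.2})) := by
  obtain ⟨g⟩ := hX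
  have hspan (i : I) : (Ideal.span {f ^ e i}).map (mapRingHom (algebraMap K L)) =
      Ideal.span {∏ j, (Polynomial.X - C (α j)) ^ e i} := by
    rw [Ideal.map_span, Set.image_singleton, coe_mapRingHom, Polynomial.map_pow, hfactor,
      Finset.prod_pow]
  let xmul (i : I) :=
    DistribSMul.toLinearMap K (K[X] ⧸ Ideal.span {f ^ e i}) (Polynomial.X : K[X])
  exact ⟨(X.aevalMapEquivBaseChange L).trans <|
    (AEval'.baseChangeEquivOfEquiv L (g.trans (DirectSum.linearEquivFunOnFintype _ _ _))).trans <|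
    (AEval'.baseChangePiMapEquiv L xmul).trans <|
    (LinearEquiv.piCongrRight fun i => (Ideal.aevalBaseChangeQuotientEquiv L _).trans <|
      (Submodule.quotEquivOfEq _ _ (hspan i)).trans <|
        Ideal.quotientSpanProdEquivPi _ fun _ _ hjk =>
          (pairwise_coprime_X_sub_C hinj hjk).pow).trans <|
    (LinearEquiv.piCurrySwap _ _).trans (DirectSum.linearEquivFunOnFintype _ _ _).symm⟩

/-- Let `f` be a monic irreducible separable polynomial of degree `d`, split over `L` with
distinct roots `α 1, …, α d`. If `K^n` as a `K[x]`-module via `X` is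
`⨁ i, K[x]/(f ^ e i)`, then `L^n` as an `L[x]`-module via the image of `X` is
`⨁ (j, i), L[x]/((x - α j) ^ e i)`. -/
theorem baseChange_type_separable
    (K L : Type*) [Field K] [Field L] [Algebra K L]
    (n : ℕ) (X : Matrix (Fin n) (Fin n) K)
    (f : Polynomial K) (hmonic : f.Monic) (hirr : Irreducible f) (hsep : f.Separable)
    (d : ℕ) (hd : f.natDegree = d)
    [Polynomial.IsSplittingField K L f]
    (α : Fin d → L) (hinj : Function.Injective α)
    (hfactor : f.map (algebraMap K L) =
      ∏ j : Fin d, (Polynomial.X - Polynomial.C (α j)))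
    (I : Type*) [Fintype I] [DecidableEq I] (e : I → ℕ) (hpos : ∀ i, 0 < e i)
    (hX : Nonempty ((Module.AEval' X.mulVecLin) ≃ₗ[Polynomial K]
      (⨁ i : I, Polynomial K ⧸ Ideal.span {f ^ e i}))) :
    Nonempty ((Module.AEval' (X.map (algebraMap K L)).mulVecLin) ≃ₗ[Polynomial L]
      (⨁ p : Fin d × I,
        Polynomial L ⧸ Ideal.span
          {(Polynomial.X - Polynomial.C (α p.1)) ^ e p.2})) :=
  baseChange_type_separable_general K L n X f d α hinj hfactor I e hX
end

section
/- Let K be a field of prime characteristic p, let f ∈ K[x] be a polynomial such that q(x) := f(x^p) is irreducible over K, let L be a field extension of K, and let g ∈ L[x] be a polynomial with g(x)^p equal to the image of q(x) in L[x]. Let I be a finite index set, e_i positive integers, and X ∈ Mat_n(K) such that K^n as a K[x]-module via X is isomorphic to ⊕_{i∈I} K[x]/(q^{e_i}). Then L^n, as an L[x]-module with x acting as the entrywise image of X in Mat_n(L), is isomorphic to ⊕_{i∈I} L[x]/(g^{p·e_i}). -/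
/-!
Base change along `K → L` sends the cyclic module `K[x]/(a)` to `L[x]/(a)`, and the image of
`q ^ e` is `g ^ (p * e)`. Concretely, the images in `L^n` of the cyclic generators of `K^n` are
killed by the images of the `q ^ e i` and span `L^n` over `L[x]`, which gives a surjection
`⨁ i, L[x]/(g ^ (p * e i)) → L^n`; both sides have `L`-dimension `∑ i, e i * deg q = n`.
-/

open Polynomial Module
open scoped DirectSum

theorem finite_quotient_span_of_ne_zero {K : Type*} [Field K] {a : K[X]} (ha : a ≠ 0) :
    Module.Finite K (K[X] ⧸ Ideal.span {a}) :=
  (AdjoinRoot.powerBasis ha).finite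

theorem finrank_directSum_quotient_span_eq_sum_natDegree {K ι : Type*} [Field K] [Fintype ι]
    (a : ι → K[X]) (ha : ∀ i, a i ≠ 0) :
    finrank K (⨁ i, K[X] ⧸ Ideal.span {a i}) = ∑ i, (a i).natDegree := by
  have (i : ι) : Module.Finite K (K[X] ⧸ Ideal.span {a i}) :=
    finite_quotient_span_of_ne_zero (ha i)
  rw [finrank_directSum]
  exact Finset.sum_congr rfl fun i _ => finrank_quotient_span_eq_natDegree

theorem Ideal.Quotient.smul_one_span_singleton {R : Type*} [CommRing R] (a : R) :
    a • (1 : R ⧸ Ideal.span {a}) = 0 := by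
  rw [show (1 : R ⧸ Ideal.span {a}) = Submodule.Quotient.mk 1 from rfl,
    ← Submodule.Quotient.mk_smul, smul_eq_mul, mul_one, Submodule.Quotient.mk_eq_zero]
  exact Ideal.mem_span_singleton_self a

theorem DirectSum.span_range_lof_one {R ι : Type*} [CommRing R] [DecidableEq ι]
    (J : ι → Ideal R) :
    Submodule.span R (Set.range fun i => lof R ι (fun i => R ⧸ J i) i 1) = ⊤ := by
  refine Submodule.eq_top_iff'.2 fun x => ?_
  induction x using DirectSum.induction_on with
  | zero => exact zero_mem _
  | of i y =>
    obtain ⟨r, rfl⟩ := Ideal.Quotient.mk_surjective y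
    have : of _ i (Ideal.Quotient.mk (J i) r) = r • lof R ι (fun i => R ⧸ J i) i 1 := by
      rw [← map_smul, Algebra.smul_def, mul_one]; rfl
    rw [this]
    exact Submodule.smul_mem _ _ (Submodule.subset_span ⟨i, rfl⟩)
  | add x y hx hy => exact add_mem hx hy

theorem DirectSum.exists_surjective_of_smul_eq_zero_of_span_eq_top {R N ι : Type*} [CommRing R]
    [AddCommGroup N] [Module R N] (a : ι → R) (w : ι → N) (hw : ∀ i, a i • w i = 0)
    (hspan : Submodule.span R (Set.range w) = ⊤) :
    ∃ Φ : (⨁ i, R ⧸ Ideal.span {a i}) →ₗ[R] N, Function.Surjective Φ := by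
  classical
  let Φ := toModule R ι N fun i =>
    Submodule.liftQSpanSingleton (a i) (LinearMap.toSpanSingleton R N (w i)) (hw i)
  refine ⟨Φ, LinearMap.range_eq_top.1 (eq_top_iff.2 (hspan ▸ Submodule.span_le.2 ?_))⟩
  rintro _ ⟨i, rfl⟩
  exact ⟨lof R ι _ i (Submodule.Quotient.mk 1), by
    simp only [Φ, toModule_lof]
    exact one_smul R (w i)⟩

namespace Matrix

theorem finrank_aeval'_mulVecLin {K ι : Type*} [Field K] [Fintype ι] (Y : Matrix ι ι K) :
    finrank K (AEval' Y.mulVecLin) = Fintype.card ι := by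
  rw [← (AEval'.of _).finrank_eq, finrank_fintype_fun_eq_card]

section CommRing
variable {K L ι : Type*} [CommRing K] [CommRing L] [Fintype ι] [DecidableEq ι]

theorem map_aeval (σ : K →+* L) (X : Matrix ι ι K) (P : K[X]) :
    (aeval X P).map σ = aeval (X.map σ) (P.map σ) := by
  rw [aeval_def, aeval_def, eval₂_map, ← RingHom.mapMatrix_apply, hom_eval₂]
  congr 1
  ext a : 1
  simp [algebraMap_eq_diagonal]

theorem aeval_mulVecLin (X : Matrix ι ι K) (P : K[X]) :
    aeval X.mulVecLin P = (aeval X P).mulVecLin :=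
  aeval_algHom_apply (toLinAlgEquiv' : Matrix ι ι K ≃ₐ[K] _) X P

noncomputable def aevalMap (σ : K →+* L) (X : Matrix ι ι K) :
    AEval' X.mulVecLin →ₛₗ[mapRingHom σ] AEval' (X.map σ).mulVecLin where
  toFun m := AEval'.of _ (σ ∘ (AEval'.of _).symm m)
  map_add' m m' := by
    rw [← map_add]
    congr 1
    ext j
    simp
  map_smul' P m := by
    rw [AEval.of_symm_smul, ← AEval.of_aeval_smul]
    congr 1
    ext j
    simp [aeval_mulVecLin, ← map_aeval, RingHom.map_mulVec]

theorem aevalMap_of (σ : K →+* L) (X : Matrix ι ι K) (v : ι → K) :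
    aevalMap σ X (AEval'.of _ v) = AEval'.of _ (σ ∘ v) := by
  simp [aevalMap]

theorem span_range_aevalMap (σ : K →+* L) (X : Matrix ι ι K) :
    Submodule.span L[X] (Set.range (aevalMap σ X)) = ⊤ := by
  refine Submodule.eq_top_iff'.2 fun u => ?_
  obtain ⟨v, rfl⟩ := (AEval'.of _).surjective u
  rw [← Finset.univ_sum_single v, map_sum]
  refine Submodule.sum_mem _ fun j _ => ?_
  have hsingle : AEval'.of (X.map σ).mulVecLin (Pi.single j (v j))
      = C (v j) • aevalMap σ X (AEval'.of _ (Pi.single j 1)) := by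
    rw [AEval.C_smul, aevalMap_of, ← map_smul]
    congr 1
    ext k
    by_cases hk : k = j <;> simp [hk]
  rw [hsingle]
  exact Submodule.smul_mem _ _ (Submodule.subset_span ⟨_, rfl⟩)

theorem span_image_aevalMap_eq_top (σ : K →+* L) (X : Matrix ι ι K)
    {s : Set (AEval' X.mulVecLin)} (hs : Submodule.span K[X] s = ⊤) :
    Submodule.span L[X] (aevalMap σ X '' s) = ⊤ := by
  rw [eq_top_iff, ← span_range_aevalMap σ X, Submodule.span_le]
  rintro _ ⟨m, rfl⟩
  exact Submodule.image_span_subset_span _ _ ⟨m, hs ▸ Submodule.mem_top, rfl⟩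

end CommRing

theorem nonempty_equiv_directSum_quotient_map {K L ι I : Type*} [Field K] [Field L] [Fintype ι]
    [DecidableEq ι] [Fintype I] (σ : K →+* L) (X : Matrix ι ι K) (a : I → K[X])
    (ha : ∀ i, a i ≠ 0) (e : AEval' X.mulVecLin ≃ₗ[K[X]] ⨁ i, K[X] ⧸ Ideal.span {a i}) :
    Nonempty
      (AEval' (X.map σ).mulVecLin ≃ₗ[L[X]] ⨁ i, L[X] ⧸ Ideal.span {(a i).map σ}) := by
  classical
  let gen : I → AEval' X.mulVecLin := fun i => e.symm (DirectSum.lof K[X] I _ i 1)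
  have hann (i : I) : (a i).map σ • aevalMap σ X (gen i) = 0 := by
    rw [← coe_mapRingHom, ← map_smulₛₗ, ← map_smul, ← map_smul,
      Ideal.Quotient.smul_one_span_singleton, map_zero, map_zero, map_zero]
  have hgen : Submodule.span K[X] (Set.range gen) = ⊤ := by
    have := congrArg (Submodule.map e.symm.toLinearMap)
      (DirectSum.span_range_lof_one fun i => Ideal.span {a i})
    rwa [Submodule.map_span, ← Set.range_comp, Submodule.map_top, LinearEquiv.range] at this
  have hspan : Submodule.span L[X] (Set.range (aevalMap σ X ∘ gen)) = ⊤ := by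
    rw [Set.range_comp]
    exact span_image_aevalMap_eq_top σ X hgen
  obtain ⟨Φ, hΦ⟩ :=
    DirectSum.exists_surjective_of_smul_eq_zero_of_span_eq_top _ _ hann hspan
  have (i : I) : Module.Finite L (L[X] ⧸ Ideal.span {(a i).map σ}) :=
    finite_quotient_span_of_ne_zero (map_ne_zero (ha i))
  have hfinrank : finrank L (⨁ i, L[X] ⧸ Ideal.span {(a i).map σ})
      = finrank L (AEval' (X.map σ).mulVecLin) :=
    calc finrank L (⨁ i, L[X] ⧸ Ideal.span {(a i).map σ})
        = ∑ i, ((a i).map σ).natDegree :=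
          finrank_directSum_quotient_span_eq_sum_natDegree _ fun i => map_ne_zero (ha i)
      _ = ∑ i, (a i).natDegree := by simp only [natDegree_map]
      _ = finrank K (⨁ i, K[X] ⧸ Ideal.span {a i}) :=
          (finrank_directSum_quotient_span_eq_sum_natDegree a ha).symm
      _ = finrank K (AEval' X.mulVecLin) := (e.restrictScalars K).finrank_eq.symm
      _ = finrank L (AEval' (X.map σ).mulVecLin) := by
          rw [finrank_aeval'_mulVecLin, finrank_aeval'_mulVecLin]
  have hinj : Function.Injective Φ :=
    (LinearMap.injective_iff_surjective_of_finrank_eq_finrank hfinrank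
      (f := Φ.restrictScalars L)).2 hΦ
  exact ⟨(LinearEquiv.ofBijective Φ ⟨hinj, hΦ⟩).symm⟩

end Matrix

theorem baseChange_type_of_inseparable_pth_root_general
    (K L : Type*) [Field K] [Field L] [Algebra K L]
    (p : ℕ)
    (n : ℕ) (X : Matrix (Fin n) (Fin n) K)
    (f : Polynomial K)
    (hq : Irreducible (f.comp (Polynomial.X ^ p)))
    (g : Polynomial L)
    (hg : g ^ p = (f.comp (Polynomial.X ^ p)).map (algebraMap K L))
    (I : Type*) [Fintype I] (e : I → ℕ)
    (hX : Nonempty ((Module.AEval' X.mulVecLin) ≃ₗ[Polynomial K]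
      (⨁ i : I, Polynomial K ⧸ Ideal.span {(f.comp (Polynomial.X ^ p)) ^ e i}))) :
    Nonempty ((Module.AEval' (X.map (algebraMap K L)).mulVecLin) ≃ₗ[Polynomial L]
      (⨁ i : I, Polynomial L ⧸ Ideal.span {g ^ (p * e i)})) := by
  obtain ⟨eK⟩ := hX
  have hpow (i : I) :
      ((f.comp (Polynomial.X ^ p)) ^ e i).map (algebraMap K L) = g ^ (p * e i) := by
    rw [Polynomial.map_pow, ← hg, pow_mul]
  obtain ⟨eL⟩ := Matrix.nonempty_equiv_directSum_quotient_map (algebraMap K L) X _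
    (fun i => pow_ne_zero _ hq.ne_zero) eK
  exact ⟨eL.trans (DirectSum.congrLinearEquiv fun i =>
    Submodule.quotEquivOfEq _ _ (by rw [hpow i]))⟩

/-- Let `K` have prime characteristic `p`, let `q(x) = f(x^p)` be irreducible over `K`,
let `L/K` be a field extension, and let `g ∈ L[x]` satisfy `g^p = q` (image in `L[x]`).
If `K^n` as a `K[x]`-module via `X` is `⨁ i, K[x]/(q ^ e i)`, then `L^n` as an
`L[x]`-module via the image of `X` is `⨁ i, L[x]/(g ^ (p * e i))`. -/
theorem baseChange_type_of_inseparable_pth_root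
    (K L : Type*) [Field K] [Field L] [Algebra K L]
    (p : ℕ) (hp : p.Prime) [CharP K p]
    (n : ℕ) (X : Matrix (Fin n) (Fin n) K)
    (f : Polynomial K)
    (hq : Irreducible (f.comp (Polynomial.X ^ p)))
    (g : Polynomial L)
    (hg : g ^ p = (f.comp (Polynomial.X ^ p)).map (algebraMap K L))
    (I : Type*) [Fintype I] [DecidableEq I] (e : I → ℕ) (hpos : ∀ i, 0 < e i)
    (hX : Nonempty ((Module.AEval' X.mulVecLin) ≃ₗ[Polynomial K]
      (⨁ i : I, Polynomial K ⧸ Ideal.span {(f.comp (Polynomial.X ^ p)) ^ e i}))) :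
    Nonempty ((Module.AEval' (X.map (algebraMap K L)).mulVecLin) ≃ₗ[Polynomial L]
      (⨁ i : I, Polynomial L ⧸ Ideal.span {g ^ (p * e i)})) :=
  baseChange_type_of_inseparable_pth_root_general K L p n X f hq g hg I e hX
end

section
/- Let Ω be a finite set and let g, h be permutations of Ω. If g and h are equivalent, then the centralizer of g in Sym(Ω) equals the centralizer of h in Sym(Ω). -/
/-- The set of points of `Ω` lying on a cycle of `σ` of length exactly `i`
(for `i = 1`, the fixed points of `σ`). -/
def Equiv.Perm.pointsOfCycleLength {Ω : Type*} [Fintype Ω] [DecidableEq Ω]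
    (σ : Equiv.Perm Ω) (i : ℕ) : Set Ω :=
  {a : Ω | Function.minimalPeriod σ a = i}

/-- The product of the cycles of `σ` of length exactly `i`: the permutation agreeing
with `σ` on points lying on cycles of length `i` and fixing all other points. -/
noncomputable def Equiv.Perm.cyclePart {Ω : Type*} [Fintype Ω] [DecidableEq Ω]
    (σ : Equiv.Perm Ω) (i : ℕ) : Equiv.Perm Ω :=
  (σ.cycleFactorsFinset.filter fun c => c.support.card = i).noncommProd id
    (fun _ ha _ hb hab =>
      ((σ.cycleFactorsFinset_pairwise_disjoint
        (Finset.mem_filter.mp ha).1 (Finset.mem_filter.mp hb).1 hab)).commute)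

/-- `g` and `h` are locally equivalent at `i` if they have the same points on cycles of
length `i` and the product of the cycles of `h` of length `i` is an integer power of the
product of the cycles of `g` of length `i`. -/
def Equiv.Perm.LocallyEquivalentAt {Ω : Type*} [Fintype Ω] [DecidableEq Ω]
    (g h : Equiv.Perm Ω) (i : ℕ) : Prop :=
  g.pointsOfCycleLength i = h.pointsOfCycleLength i ∧
    ∃ k : ℤ, h.cyclePart i = (g.cyclePart i) ^ k

/-- `g` and `h` are equivalent if they are locally equivalent at every `i ≥ 1`. -/
def Equiv.Perm.EquivalentPerm {Ω : Type*} [Fintype Ω] [DecidableEq Ω]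
    (g h : Equiv.Perm Ω) : Prop :=
  ∀ i : ℕ, 1 ≤ i → g.LocallyEquivalentAt h i

/-!
A permutation `x` commuting with `σ` preserves minimal periods, hence each set `X_i(σ)`, and on
`X_i(σ)` the permutation `σ` agrees with its cycle part `v_i(σ)`; so `x` commutes with `σ` exactly
when it commutes with every `v_i(σ)` and preserves every `X_i(σ)`. Both conditions transfer from
`g` to `h`, since `v_i(h)` is a power of `v_i(g)`. The relation is symmetric: `v_i(g)` and
`v_i(h)` both have order `i` (or are trivial when `X_i` is empty), so `v_i(h) = v_i(g) ^ k`
generates the same cyclic group as `v_i(g)`.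
-/

open Function

theorem Subgroup.zpowers_eq_zpowers_of_mem_of_orderOf_eq {G : Type*} [Group G] {x y : G}
    (hx : IsOfFinOrder x) (hy : y ∈ Subgroup.zpowers x) (h : orderOf y = orderOf x) :
    Subgroup.zpowers y = Subgroup.zpowers x :=
  have : Finite (Subgroup.zpowers x) := hx.finite_zpowers
  Subgroup.eq_of_le_of_card_ge (Subgroup.zpowers_le.2 hy)
    (by rw [Nat.card_zpowers, Nat.card_zpowers, h])

namespace Equiv.Perm

section Period

variable {α : Type*}

theorem pow_apply_eq_self_iff_minimalPeriod_dvd (σ : Perm α) (a : α) (n : ℕ) :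
    (σ ^ n) a = a ↔ minimalPeriod σ a ∣ n := by
  rw [← isPeriodicPt_iff_minimalPeriod_dvd, IsPeriodicPt, IsFixedPt, coe_pow]

theorem minimalPeriod_apply_of_commute {x σ : Perm α} (hx : Commute x σ) (a : α) :
    minimalPeriod σ (x a) = minimalPeriod σ a := by
  refine Nat.dvd_right_iff_eq.1 fun n => ?_
  rw [← pow_apply_eq_self_iff_minimalPeriod_dvd, ← pow_apply_eq_self_iff_minimalPeriod_dvd,
    ← mul_apply, ← (hx.pow_right n).eq, mul_apply, x.injective.eq_iff]

theorem minimalPeriod_pos [Finite α] (σ : Perm α) (a : α) : 0 < minimalPeriod σ a :=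
  minimalPeriod_pos_of_mem_periodicPts (σ.injective.mem_periodicPts a)

end Period

variable {Ω : Type*} [Fintype Ω] [DecidableEq Ω]

@[simp]
theorem mem_pointsOfCycleLength {σ : Perm Ω} {i : ℕ} {a : Ω} :
    a ∈ σ.pointsOfCycleLength i ↔ minimalPeriod σ a = i :=
  Iff.rfl

theorem minimalPeriod_eq_card_support_cycleOf {σ : Perm Ω} {a : Ω} (ha : σ a ≠ a) :
    minimalPeriod σ a = (σ.cycleOf a).support.card := by
  have hmem : a ∈ (σ.cycleOf a).support := mem_support_cycleOf_iff.2 ⟨.refl _ _, mem_support.2 ha⟩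
  refine Nat.dvd_right_iff_eq.1 fun n => ?_
  rw [← pow_apply_eq_self_iff_minimalPeriod_dvd, (σ.isCycleOn_support_cycleOf a).pow_apply_eq hmem]

theorem noncommProd_apply_of_subset_cycleFactorsFinset {σ : Perm Ω} {s : Finset (Perm Ω)}
    (hs : s ⊆ σ.cycleFactorsFinset) (comm : (s : Set (Perm Ω)).Pairwise (Commute on id))
    (a : Ω) : s.noncommProd id comm a = if σ.cycleOf a ∈ s then σ a else a := by
  set τ := s.noncommProd id comm
  have hτ : τ.cycleFactorsFinset = s :=
    cycleFactorsFinset_eq_finset.2 ⟨fun c hc => (mem_cycleFactorsFinset_iff.1 (hs hc)).1,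
      (cycleFactorsFinset_pairwise_disjoint σ).mono hs, rfl⟩
  split_ifs with h
  · have ha : a ∈ (σ.cycleOf a).support :=
      mem_support_cycleOf_iff.2 ⟨.refl _ _, cycleOf_mem_cycleFactorsFinset_iff.1 (hs h)⟩
    have h' : σ.cycleOf a ∈ τ.cycleFactorsFinset := by rwa [hτ]
    rw [← (mem_cycleFactorsFinset_iff.1 h').2 a ha,
      (mem_cycleFactorsFinset_iff.1 (hs h)).2 a ha]
  · by_contra hne
    have hmem : τ.cycleOf a ∈ s := by
      rw [← hτ]; exact cycleOf_mem_cycleFactorsFinset_iff.2 (mem_support.2 hne)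
    exact h (cycle_is_cycleOf (mem_support_cycleOf_iff.2 ⟨.refl _ _, mem_support.2 hne⟩)
      (hs hmem) ▸ hmem)

theorem cyclePart_apply (σ : Perm Ω) (i : ℕ) (a : Ω) :
    σ.cyclePart i a = if minimalPeriod σ a = i then σ a else a := by
  refine (noncommProd_apply_of_subset_cycleFactorsFinset (Finset.filter_subset _ _) _ a).trans ?_
  by_cases ha : σ a = a
  · simp [ha]
  · simp [Finset.mem_filter, cycleOf_mem_cycleFactorsFinset_iff, mem_support.2 ha,
      minimalPeriod_eq_card_support_cycleOf ha]

theorem cyclePart_apply_of_mem {σ : Perm Ω} {i : ℕ} {a : Ω} (ha : a ∈ σ.pointsOfCycleLength i) :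
    σ.cyclePart i a = σ a := by
  rw [cyclePart_apply, if_pos (mem_pointsOfCycleLength.1 ha)]

theorem cyclePart_pow_apply (σ : Perm Ω) (i n : ℕ) (a : Ω) :
    (σ.cyclePart i ^ n) a = if minimalPeriod σ a = i then (σ ^ n) a else a := by
  split_ifs with h
  · induction n with
    | zero => rfl
    | succ n ih =>
      rw [pow_succ', mul_apply, ih, pow_succ', mul_apply, cyclePart_apply_of_mem]
      rwa [mem_pointsOfCycleLength, minimalPeriod_apply_of_commute ((Commute.refl σ).pow_left n)]
  · exact pow_apply_eq_self_of_apply_eq_self ((cyclePart_apply σ i a).trans (if_neg h)) n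

theorem orderOf_cyclePart_of_mem {σ : Perm Ω} {i : ℕ} {a : Ω}
    (ha : a ∈ σ.pointsOfCycleLength i) : orderOf (σ.cyclePart i) = i := by
  refine Nat.dvd_antisymm (orderOf_dvd_of_pow_eq_one ?_) ?_
  · ext b
    rw [cyclePart_pow_apply, one_apply]
    split_ifs with hb
    · exact (pow_apply_eq_self_iff_minimalPeriod_dvd _ _ _).2 hb.dvd
    · rfl
  · have := cyclePart_pow_apply σ i (orderOf (σ.cyclePart i)) a
    rw [pow_orderOf_eq_one, if_pos (mem_pointsOfCycleLength.1 ha), one_apply] at this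
    exact (mem_pointsOfCycleLength.1 ha).symm.dvd.trans
      ((pow_apply_eq_self_iff_minimalPeriod_dvd _ _ _).1 this.symm)

theorem cyclePart_eq_one_of_eq_empty {σ : Perm Ω} {i : ℕ} (h : σ.pointsOfCycleLength i = ∅) :
    σ.cyclePart i = 1 := by
  ext b
  rw [cyclePart_apply, if_neg fun hb => h.subset (mem_pointsOfCycleLength.2 hb), one_apply]

theorem commute_cyclePart_of_commute {x σ : Perm Ω} (hx : Commute x σ) (i : ℕ) :
    Commute x (σ.cyclePart i) := by
  ext a
  simp only [mul_apply, cyclePart_apply, minimalPeriod_apply_of_commute hx]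
  split_ifs
  · exact DFunLike.congr_fun hx.eq a
  · rfl

theorem LocallyEquivalentAt.symm {g h : Perm Ω} {i : ℕ} (hgh : g.LocallyEquivalentAt h i) :
    h.LocallyEquivalentAt g i := by
  obtain ⟨hX, k, hk⟩ := hgh
  have hord : orderOf (h.cyclePart i) = orderOf (g.cyclePart i) := by
    rcases (g.pointsOfCycleLength i).eq_empty_or_nonempty with hg | ⟨a, ha⟩
    · rw [cyclePart_eq_one_of_eq_empty hg, cyclePart_eq_one_of_eq_empty (hX ▸ hg)]
    · rw [orderOf_cyclePart_of_mem ha, orderOf_cyclePart_of_mem (hX ▸ ha)]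
  have hzpowers : Subgroup.zpowers (h.cyclePart i) = Subgroup.zpowers (g.cyclePart i) :=
    Subgroup.zpowers_eq_zpowers_of_mem_of_orderOf_eq (isOfFinOrder_of_finite _)
      (Subgroup.mem_zpowers_iff.2 ⟨k, hk.symm⟩) hord
  obtain ⟨k', hk'⟩ := Subgroup.mem_zpowers_iff.1 (hzpowers ▸ Subgroup.mem_zpowers (g.cyclePart i))
  exact ⟨hX.symm, k', hk'.symm⟩

theorem EquivalentPerm.symm {g h : Perm Ω} (hgh : g.EquivalentPerm h) : h.EquivalentPerm g :=
  fun i hi => (hgh i hi).symm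

theorem EquivalentPerm.commute {g h x : Perm Ω} (hgh : g.EquivalentPerm h) (hx : Commute x g) :
    Commute x h := by
  ext a
  obtain ⟨hX, k, hk⟩ := hgh (minimalPeriod h a) (minimalPeriod_pos h a)
  have hxa : x a ∈ h.pointsOfCycleLength (minimalPeriod h a) := by
    rw [← hX, mem_pointsOfCycleLength, minimalPeriod_apply_of_commute hx]
    exact (hX ▸ rfl : a ∈ g.pointsOfCycleLength (minimalPeriod h a))
  have hcomm : Commute x (h.cyclePart (minimalPeriod h a)) :=
    hk ▸ (commute_cyclePart_of_commute hx _).zpow_right k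
  calc x (h a) = x (h.cyclePart (minimalPeriod h a) a) := by rw [cyclePart_apply_of_mem rfl]
    _ = h.cyclePart (minimalPeriod h a) (x a) := DFunLike.congr_fun hcomm.eq a
    _ = h (x a) := cyclePart_apply_of_mem hxa

theorem EquivalentPerm.centralizer_le {g h : Perm Ω} (hgh : g.EquivalentPerm h) :
    Subgroup.centralizer {g} ≤ Subgroup.centralizer {h} := fun _ hx =>
  Subgroup.mem_centralizer_singleton_iff.2
    (hgh.commute (Subgroup.mem_centralizer_singleton_iff.1 hx))

end Equiv.Perm

/-- Equivalent permutations have equal centralizers in the symmetric group. -/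
theorem centralizer_eq_of_equivalent
    (Ω : Type*) [Fintype Ω] [DecidableEq Ω] (g h : Equiv.Perm Ω)
    (heq : g.EquivalentPerm h) :
    Subgroup.centralizer ({g} : Set (Equiv.Perm Ω)) =
      Subgroup.centralizer ({h} : Set (Equiv.Perm Ω)) :=
  le_antisymm heq.centralizer_le heq.symm.centralizer_le
end
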